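/- arXiv:2302.00253 — 10 statements merged into one kernel-verified Lean document; each statement's English description precedes it below -/
import Mathlib

section
/- Let M : Matrix (Fin n) (Fin m) ℝ be a zero-sum game and S_M its von Neumann symmetrisation. Fix t : ℝ. Suppose x1 : ℝ → Fin n → ℝ and x2 : ℝ → Fin m → ℝ satisfy, at time t: ∑ s, x1 t s = 1, ∑ r, x2 t r = 1, and the non-symmetric replicator equations hold at t, i.e. for every s : Fin n, HasDerivAt (fun τ => x1 τ s) (x1 t s * ((M.mulVec (x2 t)) s - x1 t ⬝ᵥ M.mulVec (x2 t))) t, and for every r : Fin m, HasDerivAt (fun τ => x2 τ r) (-(x2 t r) * ((Mᵀ.mulVec (x1 t)) r - x1 t ⬝ᵥ M.mulVec (x2 t))) t. Define x : Fin n × Fin m → ℝ by x q = x1 t q.1 * x2 t q.2. Then for every profile p : Fin n × Fin m, HasDerivAt (fun τ => x1 τ p.1 * x2 τ p.2) (x p * (S_M.mulVec x) p) t. (Symmetrising the replicator dynamic: the flow of the non-symmetric replicator on M embeds, on the subspace of product distributions, into the flow of the symmetric replicator on S_M.) -/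
open Matrix

/-- The von Neumann symmetrisation of a zero-sum game `M`:
`(S_M) p q = M p.1 q.2 − M q.1 p.2`. -/
def vonNeumannSym {n m : ℕ} (M : Matrix (Fin n) (Fin m) ℝ) :
    Matrix (Fin n × Fin m) (Fin n × Fin m) ℝ :=
  fun p q => M p.1 q.2 - M q.1 p.2

theorem vonNeumannSym_mulVec_prod {n m : ℕ} (M : Matrix (Fin n) (Fin m) ℝ)
    (y : Fin n → ℝ) (z : Fin m → ℝ) (p : Fin n × Fin m) :
    (vonNeumannSym M *ᵥ fun q => y q.1 * z q.2) p
      = (∑ s, y s) * (M *ᵥ z) p.1 - (∑ r, z r) * (Mᵀ *ᵥ y) p.2 := by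
  simp only [vonNeumannSym, mulVec, dotProduct, transpose_apply, Fintype.sum_prod_type,
    sub_mul, Finset.sum_sub_distrib, Finset.sum_mul, Finset.mul_sum]
  congr 1
  · rw [Finset.sum_comm]
    exact Finset.sum_congr rfl fun r _ => Finset.sum_congr rfl fun s _ => by ring
  · exact Finset.sum_congr rfl fun r _ => Finset.sum_congr rfl fun s _ => by ring

/-- Symmetrising the replicator dynamic: on the subspace of product distributions,
the non-symmetric replicator flow on `M` embeds in the symmetric replicator flow
on the von Neumann symmetrisation of `M`. -/
theorem symmetrising_replicator {n m : ℕ} (M : Matrix (Fin n) (Fin m) ℝ)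
    (t : ℝ) (x1 : ℝ → Fin n → ℝ) (x2 : ℝ → Fin m → ℝ)
    (hsum1 : ∑ s, x1 t s = 1) (hsum2 : ∑ r, x2 t r = 1)
    (hrep1 : ∀ s : Fin n, HasDerivAt (fun τ => x1 τ s)
      (x1 t s * ((M.mulVec (x2 t)) s - x1 t ⬝ᵥ M.mulVec (x2 t))) t)
    (hrep2 : ∀ r : Fin m, HasDerivAt (fun τ => x2 τ r)
      (-(x2 t r) * ((Mᵀ.mulVec (x1 t)) r - x1 t ⬝ᵥ M.mulVec (x2 t))) t)
    (x : Fin n × Fin m → ℝ) (hx : ∀ q : Fin n × Fin m, x q = x1 t q.1 * x2 t q.2) :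
    ∀ p : Fin n × Fin m,
      HasDerivAt (fun τ => x1 τ p.1 * x2 τ p.2)
        (x p * ((vonNeumannSym M).mulVec x) p) t := by
  intro p
  obtain rfl : x = fun q => x1 t q.1 * x2 t q.2 := funext hx
  refine ((hrep1 p.1).mul (hrep2 p.2)).congr_deriv ?_
  -- the mixed payoff `x1 ⬝ᵥ M x2` enters the two factors with opposite signs and cancels
  rw [vonNeumannSym_mulVec_prod, hsum1, hsum2]
  ring
end

section
/- Let M : Matrix (Fin n) (Fin n) ℝ be antisymmetric (a symmetric zero-sum game), and let H ⊆ Fin n be a sink component of its preference graph (the directed graph on Fin n with an arc p→q iff M p q ≤ 0). Let x : Fin n → ℝ lie in the probability simplex (x s ≥ 0 for all s, ∑ s, x s = 1) and suppose 0 < ∑ h ∈ H, x h < 1. Then ∑ h ∈ H, x h * (M.mulVec x) h > 0. (Under the symmetric zero-sum replicator ẋ s = x s * (M.mulVec x) s, if x_H ∈ (0,1) then ẋ_H > 0.) -/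
open Matrix

/-- `H` is a sink component of the directed graph given by the relation `r`:
`H` is nonempty, any two elements of `H` are mutually reachable under the
reflexive-transitive closure of `r`, and `H` is closed under arcs. -/
def IsSinkComponent {V : Type*} (r : V → V → Prop) (H : Finset V) : Prop :=
  H.Nonempty ∧
    (∀ p ∈ H, ∀ q ∈ H, Relation.ReflTransGen r p q) ∧
    (∀ p ∈ H, ∀ q, r p q → q ∈ H)

/-- In a symmetric zero-sum game (antisymmetric `M`), if `H` is a sink component
of the preference graph (arc `p → q` iff `M p q ≤ 0`) and `x` is a point of the
probability simplex with `x_H ∈ (0,1)`, then `ẋ_H > 0` under the symmetric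
replicator `ẋ s = x s * (M.mulVec x) s`. -/
theorem symmetric_mass_increasing {n : ℕ} (M : Matrix (Fin n) (Fin n) ℝ)
    (hM : Mᵀ = -M) (H : Finset (Fin n))
    (hH : IsSinkComponent (fun p q => M p q ≤ 0) H)
    (x : Fin n → ℝ) (hx : ∀ s, 0 ≤ x s) (hsum : ∑ s, x s = 1)
    (h0 : 0 < ∑ h ∈ H, x h) (h1 : ∑ h ∈ H, x h < 1) :
    0 < ∑ h ∈ H, x h * (M.mulVec x) h := by
  have hanti : ∀ p q, M q p = - M p q := fun p q => by
    have := congrFun (congrFun hM p) q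
    simpa [Matrix.transpose_apply] using this
  have hpos : ∀ p ∈ H, ∀ q ∉ H, 0 < M p q := by
    intro p hp q hq
    by_contra h
    exact hq (hH.2.2 p hp q (le_of_not_gt h))
  have hsplit : ∑ h ∈ H, x h * (M.mulVec x) h
      = (∑ h ∈ H, ∑ q ∈ H, x h * (M h q * x q))
      + (∑ h ∈ H, ∑ q ∈ Hᶜ, x h * (M h q * x q)) := by
    rw [← Finset.sum_add_distrib]
    apply Finset.sum_congr rfl
    intro h _
    rw [← Finset.mul_sum, ← Finset.mul_sum, ← mul_add, Finset.sum_add_sum_compl]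
    simp [Matrix.mulVec, dotProduct]
  have hS : (∑ h ∈ H, ∑ q ∈ H, x h * (M h q * x q)) = 0 := by
    have e1 : (∑ h ∈ H, ∑ q ∈ H, x h * (M h q * x q))
        = ∑ h ∈ H, ∑ q ∈ H, x q * (M q h * x h) := Finset.sum_comm
    have e2 : (∑ h ∈ H, ∑ q ∈ H, x h * (M h q * x q))
        + (∑ h ∈ H, ∑ q ∈ H, x q * (M q h * x h)) = 0 := by
      rw [← Finset.sum_add_distrib]
      apply Finset.sum_eq_zero
      intro h _
      rw [← Finset.sum_add_distrib]
      apply Finset.sum_eq_zero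
      intro q _
      rw [hanti h q]
      ring
    linarith
  have hcompl : 0 < ∑ q ∈ Hᶜ, x q := by
    have := Finset.sum_add_sum_compl H x
    rw [hsum] at this
    linarith
  obtain ⟨h0', hh0, hxh0⟩ : ∃ h ∈ H, 0 < x h := by
    by_contra hc
    push_neg at hc
    have : ∑ h ∈ H, x h ≤ 0 := Finset.sum_nonpos hc
    linarith
  obtain ⟨q0, hq0, hxq0⟩ : ∃ q ∈ Hᶜ, 0 < x q := by
    by_contra hc
    push_neg at hc
    have : ∑ q ∈ Hᶜ, x q ≤ 0 := Finset.sum_nonpos hc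
    linarith
  have hB : 0 < ∑ h ∈ H, ∑ q ∈ Hᶜ, x h * (M h q * x q) := by
    apply Finset.sum_pos'
    · intro h hh
      apply Finset.sum_nonneg
      intro q hq
      exact mul_nonneg (hx h) (mul_nonneg (hpos h hh q (Finset.mem_compl.mp hq)).le (hx q))
    · refine ⟨h0', hh0, Finset.sum_pos' ?_ ⟨q0, hq0, ?_⟩⟩
      · intro q hq
        exact mul_nonneg (hx h0') (mul_nonneg (hpos h0' hh0 q (Finset.mem_compl.mp hq)).le (hx q))
      · exact mul_pos hxh0 (mul_pos (hpos h0' hh0 q0 (Finset.mem_compl.mp hq0)) hxq0)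
  rw [hsplit, hS]
  linarith
end

section
/- Let M : Matrix (Fin n) (Fin m) ℝ be a zero-sum game, S_M its von Neumann symmetrisation, and H ⊆ Fin n × Fin m a sink component of the preference (response) graph of M. Let x1 : Fin n → ℝ and x2 : Fin m → ℝ lie in the respective probability simplices, and set x p = x1 p.1 * x2 p.2 for each profile p. If 0 < ∑ h ∈ H, x h < 1, then ∑ q ∉ H, ∑ h ∈ H, x q * x h * (S_M) h q > 0. (This double sum equals the time-derivative ẋ_H of the total mass on H under the non-symmetric replicator dynamic, so ẋ_H > 0 whenever x_H ∈ (0,1).) -/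
open Matrix

/-- The arc relation of the preference (response) graph of a zero-sum game `M`:
`p → q` iff `p ≠ q` and either (`p.2 = q.2` and `M p.1 p.2 ≤ M q.1 q.2`) or
(`p.1 = q.1` and `M p.1 q.2 ≤ M p.1 p.2`). -/
def PrefArc {n m : ℕ} (M : Matrix (Fin n) (Fin m) ℝ)
    (p q : Fin n × Fin m) : Prop :=
  p ≠ q ∧ ((p.2 = q.2 ∧ M p.1 p.2 ≤ M q.1 q.2) ∨ (p.1 = q.1 ∧ M p.1 q.2 ≤ M p.1 p.2))

/-- Auxiliary "crossing" kernel: the von Neumann symmetrisation evaluated on a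
pair `(h, q)` with `h ∈ H` and `q ∉ H`, and `0` otherwise. -/
noncomputable def chiAux {n m : ℕ} (M : Matrix (Fin n) (Fin m) ℝ)
    (H : Finset (Fin n × Fin m)) (h q : Fin n × Fin m) : ℝ :=
  if h ∈ H ∧ q ∉ H then M h.1 q.2 - M q.1 h.2 else 0

section Aux

variable {n m : ℕ} (M : Matrix (Fin n) (Fin m) ℝ) (H : Finset (Fin n × Fin m))

lemma chiAux_of_mem {h q : Fin n × Fin m} (hh : h ∈ H) (hq : q ∉ H) :
    chiAux M H h q = M h.1 q.2 - M q.1 h.2 := if_pos ⟨hh, hq⟩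

lemma chiAux_of_not_mem_left {h q : Fin n × Fin m} (hh : h ∉ H) :
    chiAux M H h q = 0 := if_neg fun hc => hh hc.1

lemma chiAux_of_mem_right {h q : Fin n × Fin m} (hq : q ∈ H) :
    chiAux M H h q = 0 := if_neg fun hc => hc.2 hq

/-- Pointwise key inequality: over any "rectangle" of four profiles, the sum of
the four crossing terms of the von Neumann symmetrisation is nonnegative.
This uses only that `H` is closed under preference arcs, through the two
facts `C1` (rows) and `C2` (columns). -/
lemma psiAux_nonneg
    (C1 : ∀ (a : Fin n) (b e : Fin m), (a, b) ∈ H → (a, e) ∉ H → M a b < M a e)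
    (C2 : ∀ (b : Fin m) (a c : Fin n), (a, b) ∈ H → (c, b) ∉ H → M c b < M a b)
    (a a' : Fin n) (g g' : Fin m) :
    0 ≤ chiAux M H (a, g) (a', g') + chiAux M H (a, g') (a', g)
        + chiAux M H (a', g) (a, g') + chiAux M H (a', g') (a, g) := by
  classical
  by_cases s11 : (a, g) ∈ H
  · by_cases s12 : (a, g') ∈ H
    · by_cases s21 : (a', g) ∈ H
      · by_cases s22 : (a', g') ∈ H
        · rw [chiAux_of_mem_right M H s22, chiAux_of_mem_right M H s21,
            chiAux_of_mem_right M H s12, chiAux_of_mem_right M H s11]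
          norm_num
        · rw [chiAux_of_mem M H s11 s22, chiAux_of_mem_right M H s21,
            chiAux_of_mem_right M H s12, chiAux_of_not_mem_left M H s22]
          have f1 := C2 g' a a' s12 s22
          have f2 := C1 a' g g' s21 s22
          simp only [Prod.fst, Prod.snd] at *
          linarith
      · by_cases s22 : (a', g') ∈ H
        · rw [chiAux_of_mem_right M H s22, chiAux_of_mem M H s12 s21,
            chiAux_of_not_mem_left M H s21, chiAux_of_mem_right M H s11]
          have f1 := C2 g a a' s11 s21
          have f2 := C1 a' g' g s22 s21
          simp only [Prod.fst, Prod.snd] at *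
          linarith
        · rw [chiAux_of_mem M H s11 s22, chiAux_of_mem M H s12 s21,
            chiAux_of_not_mem_left M H s21, chiAux_of_not_mem_left M H s22]
          have f1 := C2 g a a' s11 s21
          have f2 := C2 g' a a' s12 s22
          simp only [Prod.fst, Prod.snd] at *
          linarith
    · by_cases s21 : (a', g) ∈ H
      · by_cases s22 : (a', g') ∈ H
        · rw [chiAux_of_mem_right M H s22, chiAux_of_not_mem_left M H s12,
            chiAux_of_mem M H s21 s12, chiAux_of_mem_right M H s11]
          have f1 := C1 a g g' s11 s12
          have f2 := C2 g' a' a s22 s12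
          simp only [Prod.fst, Prod.snd] at *
          linarith
        · rw [chiAux_of_mem M H s11 s22, chiAux_of_not_mem_left M H s12,
            chiAux_of_mem M H s21 s12, chiAux_of_not_mem_left M H s22]
          have f1 := C1 a g g' s11 s12
          have f2 := C1 a' g g' s21 s22
          simp only [Prod.fst, Prod.snd] at *
          linarith
      · by_cases s22 : (a', g') ∈ H
        · rw [chiAux_of_mem_right M H s22, chiAux_of_not_mem_left M H s12,
            chiAux_of_not_mem_left M H s21, chiAux_of_mem_right M H s11]
          norm_num
        · rw [chiAux_of_mem M H s11 s22, chiAux_of_not_mem_left M H s12,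
            chiAux_of_not_mem_left M H s21, chiAux_of_not_mem_left M H s22]
          have f1 := C1 a g g' s11 s12
          have f2 := C2 g a a' s11 s21
          simp only [Prod.fst, Prod.snd] at *
          linarith
  · by_cases s12 : (a, g') ∈ H
    · by_cases s21 : (a', g) ∈ H
      · by_cases s22 : (a', g') ∈ H
        · rw [chiAux_of_not_mem_left M H s11, chiAux_of_mem_right M H s21,
            chiAux_of_mem_right M H s12, chiAux_of_mem M H s22 s11]
          have f1 := C1 a g' g s12 s11
          have f2 := C2 g a' a s21 s11
          simp only [Prod.fst, Prod.snd] at *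
          linarith
        · rw [chiAux_of_not_mem_left M H s11, chiAux_of_mem_right M H s21,
            chiAux_of_mem_right M H s12, chiAux_of_not_mem_left M H s22]
          norm_num
      · by_cases s22 : (a', g') ∈ H
        · rw [chiAux_of_not_mem_left M H s11, chiAux_of_mem M H s12 s21,
            chiAux_of_mem_right M H s12, chiAux_of_mem M H s22 s11]
          have f1 := C1 a g' g s12 s11
          have f2 := C1 a' g' g s22 s21
          simp only [Prod.fst, Prod.snd] at *
          linarith
        · rw [chiAux_of_not_mem_left M H s11, chiAux_of_mem M H s12 s21,
            chiAux_of_mem_right M H s12, chiAux_of_not_mem_left M H s22]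
          have f1 := C1 a g' g s12 s11
          have f2 := C2 g' a a' s12 s22
          simp only [Prod.fst, Prod.snd] at *
          linarith
    · by_cases s21 : (a', g) ∈ H
      · by_cases s22 : (a', g') ∈ H
        · rw [chiAux_of_not_mem_left M H s11, chiAux_of_not_mem_left M H s12,
            chiAux_of_mem M H s21 s12, chiAux_of_mem M H s22 s11]
          have f1 := C2 g a' a s21 s11
          have f2 := C2 g' a' a s22 s12
          simp only [Prod.fst, Prod.snd] at *
          linarith
        · rw [chiAux_of_not_mem_left M H s11, chiAux_of_not_mem_left M H s12,
            chiAux_of_mem M H s21 s12, chiAux_of_not_mem_left M H s22]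
          have f1 := C1 a' g g' s21 s22
          have f2 := C2 g a' a s21 s11
          simp only [Prod.fst, Prod.snd] at *
          linarith
      · by_cases s22 : (a', g') ∈ H
        · rw [chiAux_of_not_mem_left M H s11, chiAux_of_not_mem_left M H s12,
            chiAux_of_not_mem_left M H s21, chiAux_of_mem M H s22 s11]
          have f1 := C1 a' g' g s22 s21
          have f2 := C2 g' a' a s22 s12
          simp only [Prod.fst, Prod.snd] at *
          linarith
        · rw [chiAux_of_not_mem_left M H s11, chiAux_of_not_mem_left M H s12,
            chiAux_of_not_mem_left M H s21, chiAux_of_not_mem_left M H s22]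
          norm_num

/-- Strict version of the pointwise inequality, when the first profile is in
`H` and the opposite corner is not. -/
lemma psiAux_pos
    (C1 : ∀ (a : Fin n) (b e : Fin m), (a, b) ∈ H → (a, e) ∉ H → M a b < M a e)
    (C2 : ∀ (b : Fin m) (a c : Fin n), (a, b) ∈ H → (c, b) ∉ H → M c b < M a b)
    (a a' : Fin n) (g g' : Fin m) (s11 : (a, g) ∈ H) (s22 : (a', g') ∉ H) :
    0 < chiAux M H (a, g) (a', g') + chiAux M H (a, g') (a', g)
        + chiAux M H (a', g) (a, g') + chiAux M H (a', g') (a, g) := by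
  classical
  by_cases s12 : (a, g') ∈ H
  · by_cases s21 : (a', g) ∈ H
    · rw [chiAux_of_mem M H s11 s22, chiAux_of_mem_right M H s21,
        chiAux_of_mem_right M H s12, chiAux_of_not_mem_left M H s22]
      have f1 := C2 g' a a' s12 s22
      have f2 := C1 a' g g' s21 s22
      simp only [Prod.fst, Prod.snd] at *
      linarith
    · rw [chiAux_of_mem M H s11 s22, chiAux_of_mem M H s12 s21,
        chiAux_of_not_mem_left M H s21, chiAux_of_not_mem_left M H s22]
      have f1 := C2 g a a' s11 s21
      have f2 := C2 g' a a' s12 s22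
      simp only [Prod.fst, Prod.snd] at *
      linarith
  · by_cases s21 : (a', g) ∈ H
    · rw [chiAux_of_mem M H s11 s22, chiAux_of_not_mem_left M H s12,
        chiAux_of_mem M H s21 s12, chiAux_of_not_mem_left M H s22]
      have f1 := C1 a g g' s11 s12
      have f2 := C1 a' g g' s21 s22
      simp only [Prod.fst, Prod.snd] at *
      linarith
    · rw [chiAux_of_mem M H s11 s22, chiAux_of_not_mem_left M H s12,
        chiAux_of_not_mem_left M H s21, chiAux_of_not_mem_left M H s22]
      have f1 := C1 a g g' s11 s12
      have f2 := C2 g a a' s11 s21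
      simp only [Prod.fst, Prod.snd] at *
      linarith

end Aux

/-- In a (non-symmetric) zero-sum game `M`, if `H` is a sink component of the
preference graph and `x` is the product distribution of a mixed profile
`(x1, x2)` with `x_H ∈ (0,1)`, then `ẋ_H > 0` under the non-symmetric
replicator dynamic: the double sum over crossing pairs, weighted by the von
Neumann symmetrisation, is strictly positive. -/
theorem nonsymmetric_mass_increasing {n m : ℕ} (M : Matrix (Fin n) (Fin m) ℝ)
    (H : Finset (Fin n × Fin m)) (hH : IsSinkComponent (PrefArc M) H)
    (x1 : Fin n → ℝ) (x2 : Fin m → ℝ)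
    (hx1 : ∀ s, 0 ≤ x1 s) (hsum1 : ∑ s, x1 s = 1)
    (hx2 : ∀ r, 0 ≤ x2 r) (hsum2 : ∑ r, x2 r = 1)
    (x : Fin n × Fin m → ℝ) (hx : ∀ p : Fin n × Fin m, x p = x1 p.1 * x2 p.2)
    (h0 : 0 < ∑ h ∈ H, x h) (h1 : ∑ h ∈ H, x h < 1) :
    0 < ∑ q ∈ Hᶜ, ∑ h ∈ H, x q * x h * vonNeumannSym M h q := by
  classical
  have hclosed : ∀ p ∈ H, ∀ q, PrefArc M p q → q ∈ H := hH.2.2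
  -- the two closure facts
  have C1 : ∀ (a : Fin n) (b e : Fin m), (a, b) ∈ H → (a, e) ∉ H → M a b < M a e := by
    intro a b e hb he
    by_contra hle
    push_neg at hle
    refine he (hclosed (a, b) hb (a, e) ⟨?_, Or.inr ⟨rfl, hle⟩⟩)
    intro hEq
    exact he (hEq ▸ hb)
  have C2 : ∀ (b : Fin m) (a c : Fin n), (a, b) ∈ H → (c, b) ∉ H → M c b < M a b := by
    intro b a c ha hc
    by_contra hle
    push_neg at hle
    refine hc (hclosed (a, b) ha (c, b) ⟨?_, Or.inl ⟨rfl, hle⟩⟩)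
    intro hEq
    exact hc (hEq ▸ ha)
  have hxnn : ∀ p : Fin n × Fin m, 0 ≤ x p := by
    intro p; rw [hx p]; exact mul_nonneg (hx1 _) (hx2 _)
  -- total mass is 1
  have htot : ∑ p : Fin n × Fin m, x p = 1 := by
    rw [Fintype.sum_prod_type]
    calc ∑ a : Fin n, ∑ g : Fin m, x (a, g)
        = ∑ a : Fin n, ∑ g : Fin m, x1 a * x2 g :=
          Finset.sum_congr rfl fun a _ => Finset.sum_congr rfl fun g _ => hx (a, g)
      _ = (∑ a : Fin n, x1 a) * (∑ g : Fin m, x2 g) := (Finset.sum_mul_sum _ _ _ _).symm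
      _ = 1 := by rw [hsum1, hsum2]; norm_num
  -- positive-mass witnesses inside and outside H
  have hh0 : ∃ p ∈ H, 0 < x p := by
    by_contra hc
    push_neg at hc
    exact absurd h0 (not_lt.mpr (Finset.sum_nonpos hc))
  have hcompl : ∑ q ∈ Hᶜ, x q = 1 - ∑ h ∈ H, x h := by
    have h' := Finset.sum_compl_add_sum H x
    rw [htot] at h'
    linarith
  have hq0 : ∃ p ∈ Hᶜ, 0 < x p := by
    by_contra hc
    push_neg at hc
    have h' := Finset.sum_nonpos hc
    rw [hcompl] at h'
    linarith
  obtain ⟨h₀, hh₀H, hh₀pos⟩ := hh0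
  obtain ⟨q₀, hq₀H, hq₀pos⟩ := hq0
  have hq₀nH : q₀ ∉ H := Finset.mem_compl.mp hq₀H
  -- rewrite the goal sum as a sum over all pairs of profiles
  have h1sum : ∑ q ∈ Hᶜ, ∑ h ∈ H, x q * x h * vonNeumannSym M h q
      = ∑ z : (Fin n × Fin m) × (Fin n × Fin m), x z.2 * x z.1 * chiAux M H z.1 z.2 := by
    calc ∑ q ∈ Hᶜ, ∑ h ∈ H, x q * x h * vonNeumannSym M h q
        = ∑ q ∈ Hᶜ, ∑ h ∈ H, x q * x h * chiAux M H h q := by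
          refine Finset.sum_congr rfl fun q hq => Finset.sum_congr rfl fun h hh => ?_
          rw [chiAux_of_mem M H hh (Finset.mem_compl.mp hq)]
          rfl
      _ = ∑ q ∈ Hᶜ, ∑ h : Fin n × Fin m, x q * x h * chiAux M H h q := by
          refine Finset.sum_congr rfl fun q _ => ?_
          refine Finset.sum_subset (Finset.subset_univ H) fun h _ hh => ?_
          rw [chiAux_of_not_mem_left M H hh, mul_zero]
      _ = ∑ q : Fin n × Fin m, ∑ h : Fin n × Fin m, x q * x h * chiAux M H h q := by
          refine Finset.sum_subset (Finset.subset_univ Hᶜ) fun q _ hq => ?_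
          refine Finset.sum_eq_zero fun h _ => ?_
          have hqH : q ∈ H := by
            by_contra hq'
            exact hq (Finset.mem_compl.mpr hq')
          rw [chiAux_of_mem_right M H hqH, mul_zero]
      _ = ∑ h : Fin n × Fin m, ∑ q : Fin n × Fin m, x q * x h * chiAux M H h q :=
          Finset.sum_comm
      _ = ∑ z : (Fin n × Fin m) × (Fin n × Fin m), x z.2 * x z.1 * chiAux M H z.1 z.2 :=
          (Fintype.sum_prod_type
            (fun z : (Fin n × Fin m) × (Fin n × Fin m) =>
              x z.2 * x z.1 * chiAux M H z.1 z.2)).symm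
  -- the three reindexed orientation sums
  have horient2 :
      ∑ z : (Fin n × Fin m) × (Fin n × Fin m),
          x z.2 * x z.1 * chiAux M H (z.1.1, z.2.2) (z.2.1, z.1.2)
      = ∑ z : (Fin n × Fin m) × (Fin n × Fin m), x z.2 * x z.1 * chiAux M H z.1 z.2 := by
    have he : Function.Bijective
        (fun z : (Fin n × Fin m) × (Fin n × Fin m) => ((z.1.1, z.2.2), (z.2.1, z.1.2))) := by
      apply Function.Involutive.bijective
      intro z
      rfl
    refine Fintype.sum_bijective _ he
      (fun z : (Fin n × Fin m) × (Fin n × Fin m) =>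
        x z.2 * x z.1 * chiAux M H (z.1.1, z.2.2) (z.2.1, z.1.2))
      (fun z : (Fin n × Fin m) × (Fin n × Fin m) => x z.2 * x z.1 * chiAux M H z.1 z.2)
      fun z => ?_
    show x z.2 * x z.1 * chiAux M H (z.1.1, z.2.2) (z.2.1, z.1.2)
        = x (z.2.1, z.1.2) * x (z.1.1, z.2.2) * chiAux M H (z.1.1, z.2.2) (z.2.1, z.1.2)
    rw [hx z.2, hx z.1, hx (z.2.1, z.1.2), hx (z.1.1, z.2.2)]
    ring
  have horient3 :
      ∑ z : (Fin n × Fin m) × (Fin n × Fin m),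
          x z.2 * x z.1 * chiAux M H (z.2.1, z.1.2) (z.1.1, z.2.2)
      = ∑ z : (Fin n × Fin m) × (Fin n × Fin m), x z.2 * x z.1 * chiAux M H z.1 z.2 := by
    have he : Function.Bijective
        (fun z : (Fin n × Fin m) × (Fin n × Fin m) => ((z.2.1, z.1.2), (z.1.1, z.2.2))) := by
      apply Function.Involutive.bijective
      intro z
      rfl
    refine Fintype.sum_bijective _ he
      (fun z : (Fin n × Fin m) × (Fin n × Fin m) =>
        x z.2 * x z.1 * chiAux M H (z.2.1, z.1.2) (z.1.1, z.2.2))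
      (fun z : (Fin n × Fin m) × (Fin n × Fin m) => x z.2 * x z.1 * chiAux M H z.1 z.2)
      fun z => ?_
    show x z.2 * x z.1 * chiAux M H (z.2.1, z.1.2) (z.1.1, z.2.2)
        = x (z.1.1, z.2.2) * x (z.2.1, z.1.2) * chiAux M H (z.2.1, z.1.2) (z.1.1, z.2.2)
    rw [hx z.2, hx z.1, hx (z.1.1, z.2.2), hx (z.2.1, z.1.2)]
    ring
  have horient4 :
      ∑ z : (Fin n × Fin m) × (Fin n × Fin m), x z.2 * x z.1 * chiAux M H z.2 z.1
      = ∑ z : (Fin n × Fin m) × (Fin n × Fin m), x z.2 * x z.1 * chiAux M H z.1 z.2 := by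
    have he : Function.Bijective
        (fun z : (Fin n × Fin m) × (Fin n × Fin m) => (z.2, z.1)) := by
      apply Function.Involutive.bijective
      intro z
      rfl
    refine Fintype.sum_bijective _ he
      (fun z : (Fin n × Fin m) × (Fin n × Fin m) => x z.2 * x z.1 * chiAux M H z.2 z.1)
      (fun z : (Fin n × Fin m) × (Fin n × Fin m) => x z.2 * x z.1 * chiAux M H z.1 z.2)
      fun z => ?_
    show x z.2 * x z.1 * chiAux M H z.2 z.1 = x z.1 * x z.2 * chiAux M H z.2 z.1
    ring
  -- the symmetrised sum equals four times the original sum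
  have hsym : ∑ z : (Fin n × Fin m) × (Fin n × Fin m),
      (x z.2 * x z.1) * (chiAux M H z.1 z.2 + chiAux M H (z.1.1, z.2.2) (z.2.1, z.1.2)
        + chiAux M H (z.2.1, z.1.2) (z.1.1, z.2.2) + chiAux M H z.2 z.1)
      = 4 * ∑ z : (Fin n × Fin m) × (Fin n × Fin m), x z.2 * x z.1 * chiAux M H z.1 z.2 := by
    have expand : ∀ z : (Fin n × Fin m) × (Fin n × Fin m),
        (x z.2 * x z.1) * (chiAux M H z.1 z.2 + chiAux M H (z.1.1, z.2.2) (z.2.1, z.1.2)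
          + chiAux M H (z.2.1, z.1.2) (z.1.1, z.2.2) + chiAux M H z.2 z.1)
        = x z.2 * x z.1 * chiAux M H z.1 z.2
          + x z.2 * x z.1 * chiAux M H (z.1.1, z.2.2) (z.2.1, z.1.2)
          + x z.2 * x z.1 * chiAux M H (z.2.1, z.1.2) (z.1.1, z.2.2)
          + x z.2 * x z.1 * chiAux M H z.2 z.1 := fun z => by ring
    rw [Finset.sum_congr rfl fun z _ => expand z]
    rw [Finset.sum_add_distrib, Finset.sum_add_distrib, Finset.sum_add_distrib]
    rw [horient2, horient3, horient4]
    ring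
  -- positivity of the symmetrised sum
  have hpos : 0 < ∑ z : (Fin n × Fin m) × (Fin n × Fin m),
      (x z.2 * x z.1) * (chiAux M H z.1 z.2 + chiAux M H (z.1.1, z.2.2) (z.2.1, z.1.2)
        + chiAux M H (z.2.1, z.1.2) (z.1.1, z.2.2) + chiAux M H z.2 z.1) := by
    refine Finset.sum_pos' ?_ ?_
    · intro z _
      refine mul_nonneg (mul_nonneg (hxnn _) (hxnn _)) ?_
      have := psiAux_nonneg M H C1 C2 z.1.1 z.2.1 z.1.2 z.2.2
      simpa using this
    · refine ⟨(h₀, q₀), Finset.mem_univ _, ?_⟩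
      refine mul_pos (mul_pos hq₀pos hh₀pos) ?_
      have := psiAux_pos M H C1 C2 h₀.1 q₀.1 h₀.2 q₀.2
        (by simpa using hh₀H) (by simpa using hq₀nH)
      simpa using this
  rw [h1sum]
  rw [hsym] at hpos
  linarith
end

section
/- Let n, m ≥ 1 and let M : Matrix (Fin n) (Fin m) ℝ be a zero-sum game. Then the preference (response) graph of M has exactly one sink component: there exists a unique set H ⊆ Fin n × Fin m that is nonempty, strongly connected under the reflexive-transitive closure of the arc relation, and closed under arcs. -/
open Matrix

lemma reach_col {n m : ℕ} (M : Matrix (Fin n) (Fin m) ℝ) {p q : Fin n × Fin m}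
    (h2 : p.2 = q.2) (h : M p.1 p.2 ≤ M q.1 q.2) :
    Relation.ReflTransGen (PrefArc M) p q := by
  by_cases hpq : p = q
  · exact hpq ▸ Relation.ReflTransGen.refl
  · exact Relation.ReflTransGen.single ⟨hpq, Or.inl ⟨h2, h⟩⟩

lemma reach_row {n m : ℕ} (M : Matrix (Fin n) (Fin m) ℝ) {p q : Fin n × Fin m}
    (h1 : p.1 = q.1) (h : M p.1 q.2 ≤ M p.1 p.2) :
    Relation.ReflTransGen (PrefArc M) p q := by
  by_cases hpq : p = q
  · exact hpq ▸ Relation.ReflTransGen.refl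
  · exact Relation.ReflTransGen.single ⟨hpq, Or.inr ⟨h1, h⟩⟩

lemma closed_rtg {V : Type*} {r : V → V → Prop} {H : Finset V}
    (hc : ∀ p ∈ H, ∀ q, r p q → q ∈ H) {p q : V}
    (h : Relation.ReflTransGen r p q) (hp : p ∈ H) : q ∈ H := by
  induction h with
  | refl => exact hp
  | tail _ hstep ih => exact hc _ ih _ hstep

/-- The preference (response) graph of a zero-sum game has exactly one sink
component. -/
theorem nonsymmetric_unique_sink_component {n m : ℕ} (hn : 1 ≤ n) (hm : 1 ≤ m)
    (M : Matrix (Fin n) (Fin m) ℝ) :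
    ∃! H : Finset (Fin n × Fin m), IsSinkComponent (PrefArc M) H := by
  classical
  have hn' : Nonempty (Fin n) := ⟨⟨0, hn⟩⟩
  have hm' : Nonempty (Fin m) := ⟨⟨0, hm⟩⟩
  have hr : ∀ j : Fin m, ∃ i : Fin n, ∀ i', M i' j ≤ M i j := fun j =>
    Finite.exists_max (fun i => M i j)
  choose rr hrr using hr
  obtain ⟨j0, hj0⟩ := Finite.exists_min (fun j => M (rr j) j)
  set v : Fin n × Fin m := (rr j0, j0) with hv
  have hreach : ∀ p : Fin n × Fin m, Relation.ReflTransGen (PrefArc M) p v := by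
    rintro ⟨i, j⟩
    have s1 : Relation.ReflTransGen (PrefArc M) (i, j) (rr j, j) :=
      reach_col M rfl (hrr j i)
    have s2 : Relation.ReflTransGen (PrefArc M) (rr j, j) (rr j, j0) :=
      reach_row M rfl (le_trans (hrr j0 (rr j)) (hj0 j))
    have s3 : Relation.ReflTransGen (PrefArc M) (rr j, j0) v :=
      reach_col M rfl (hrr j0 (rr j))
    exact (s1.trans s2).trans s3
  refine ⟨Finset.univ.filter (fun q => Relation.ReflTransGen (PrefArc M) v q),
    ⟨⟨v, Finset.mem_filter.2 ⟨Finset.mem_univ v, Relation.ReflTransGen.refl⟩⟩, ?_, ?_⟩, ?_⟩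
  · intro p hp q hq
    simp only [Finset.mem_filter] at hq
    exact (hreach p).trans hq.2
  · intro p hp q hpq
    simp only [Finset.mem_filter, Finset.mem_univ, true_and] at hp ⊢
    exact hp.tail hpq
  · rintro H' ⟨⟨p, hp⟩, hsc, hcl⟩
    have hv' : v ∈ H' := closed_rtg hcl (hreach p) hp
    ext q
    simp only [Finset.mem_filter, Finset.mem_univ, true_and]
    constructor
    · intro hq
      exact hsc v hv' q hq
    · intro h
      exact closed_rtg hcl h hv'
end

section
/- Let M : Matrix (Fin n) (Fin m) ℝ be a zero-sum game and let H be a sink component of its preference (response) graph. Let q ∉ H and h ∈ H be comparable profiles. Then the arc between q and h is directed into H with strictly positive weight: if q.2 = h.2 (and q.1 ≠ h.1) then M q.1 q.2 < M h.1 h.2, and if q.1 = h.1 (and q.2 ≠ h.2) then M h.1 h.2 < M q.1 q.2. -/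
open Matrix

/-- In a zero-sum game, an arc between comparable profiles `q ∉ H` and `h ∈ H`,
where `H` is a sink component of the preference graph, is directed into `H`
with strictly positive weight. -/
theorem comparable_arc_into_sink_component {n m : ℕ}
    (M : Matrix (Fin n) (Fin m) ℝ) (H : Finset (Fin n × Fin m))
    (hH : IsSinkComponent (PrefArc M) H)
    (q h : Fin n × Fin m) (hq : q ∉ H) (hh : h ∈ H) (hne : q ≠ h)
    (hcomp : q.1 = h.1 ∨ q.2 = h.2) :
    (q.2 = h.2 → M q.1 q.2 < M h.1 h.2) ∧
    (q.1 = h.1 → M h.1 h.2 < M q.1 q.2) := by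
  obtain ⟨-, -, hclosed⟩ := hH
  have hnoarc : ¬ PrefArc M h q := fun harc => hq (hclosed h hh q harc)
  constructor
  · intro h2
    by_contra hle
    push_neg at hle
    exact hnoarc ⟨(Ne.symm hne), Or.inl ⟨h2.symm, hle⟩⟩
  · intro h1
    by_contra hle
    push_neg at hle
    refine hnoarc ⟨(Ne.symm hne), Or.inr ⟨h1.symm, ?_⟩⟩
    rw [h1] at hle; exact hle
end

section
/- Let M : Matrix (Fin n) (Fin m) ℝ be a zero-sum game, let (x, y) be a Nash equilibrium of M, and let H be the sink component of the preference (response) graph of M. Then the support of the equilibrium is contained in H: for every s with x s > 0 and every t with y t > 0, the profile (s, t) lies in H. -/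
open Matrix

private lemma supp_nonempty' {ι : Type*} [Fintype ι] {w : ι → ℝ}
    (hw : ∀ i, 0 ≤ w i) (hws : ∑ i, w i = 1) : ∃ i, 0 < w i := by
  by_contra hc
  push_neg at hc
  have h0 : ∑ i, w i = 0 := Finset.sum_eq_zero fun i _ => le_antisymm (hc i) (hw i)
  rw [h0] at hws; norm_num at hws

private lemma exists_supp_le' {ι : Type*} [Fintype ι] (w f : ι → ℝ) (v : ℝ)
    (hw : ∀ i, 0 ≤ w i) (hws : ∑ i, w i = 1) (h : ∑ i, w i * f i ≤ v) :
    ∃ i, 0 < w i ∧ f i ≤ v := by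
  by_contra hc
  push_neg at hc
  obtain ⟨i0, hi0⟩ := supp_nonempty' hw hws
  have hlt : ∑ i, w i * v < ∑ i, w i * f i := by
    refine Finset.sum_lt_sum (fun i _ => ?_) ⟨i0, Finset.mem_univ _, ?_⟩
    · rcases (hw i).lt_or_eq with hi | hi
      · exact le_of_lt (mul_lt_mul_of_pos_left (hc i hi) hi)
      · simp [← hi]
    · exact mul_lt_mul_of_pos_left (hc i0 hi0) hi0
  rw [← Finset.sum_mul, hws, one_mul] at hlt
  linarith

private lemma exists_supp_ge' {ι : Type*} [Fintype ι] (w f : ι → ℝ) (v : ℝ)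
    (hw : ∀ i, 0 ≤ w i) (hws : ∑ i, w i = 1) (h : v ≤ ∑ i, w i * f i) :
    ∃ i, 0 < w i ∧ v ≤ f i := by
  obtain ⟨i, hi, hle⟩ := exists_supp_le' w (fun i => -f i) (-v) hw hws (by
    show ∑ i, w i * -f i ≤ -v
    have hh : ∑ i, w i * -f i = -∑ i, w i * f i := by
      rw [← Finset.sum_neg_distrib]
      exact Finset.sum_congr rfl fun i _ => by ring
    rw [hh]; linarith)
  have hle' : -f i ≤ -v := hle
  exact ⟨i, hi, by linarith⟩

private lemma eq_of_le_avg' {ι : Type*} [Fintype ι] (w f : ι → ℝ) (v : ℝ)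
    (hw : ∀ i, 0 ≤ w i) (hws : ∑ i, w i = 1) (hle : ∀ i, f i ≤ v)
    (hsum : ∑ i, w i * f i = v) : ∀ i, 0 < w i → f i = v := by
  intro i hi
  by_contra hc
  have hilt : f i < v := lt_of_le_of_ne (hle i) hc
  have hlt : ∑ j, w j * f j < ∑ j, w j * v :=
    Finset.sum_lt_sum (fun j _ => mul_le_mul_of_nonneg_left (hle j) (hw j))
      ⟨i, Finset.mem_univ _, mul_lt_mul_of_pos_left hilt hi⟩
  rw [← Finset.sum_mul, hws, one_mul] at hlt
  linarith

private lemma eq_of_ge_avg' {ι : Type*} [Fintype ι] (w f : ι → ℝ) (v : ℝ)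
    (hw : ∀ i, 0 ≤ w i) (hws : ∑ i, w i = 1) (hge : ∀ i, v ≤ f i)
    (hsum : ∑ i, w i * f i = v) : ∀ i, 0 < w i → f i = v := by
  intro i hi
  have h1 := eq_of_le_avg' w (fun j => -f j) (-v) hw hws (fun j => neg_le_neg (hge j))
    (by
      show ∑ j, w j * -f j = -v
      have hh : ∑ j, w j * -f j = -∑ j, w j * f j := by
        rw [← Finset.sum_neg_distrib]
        exact Finset.sum_congr rfl fun j _ => by ring
      rw [hh, hsum]) i hi
  have h2 : -f i = -v := h1
  linarith

private lemma col_step' {n m : ℕ} {M : Matrix (Fin n) (Fin m) ℝ}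
    {h : Fin n × Fin m} {p p' : Fin n} {q : Fin m}
    (hr : Relation.ReflTransGen (PrefArc M) h (p, q)) (hle : M p q ≤ M p' q) :
    Relation.ReflTransGen (PrefArc M) h (p', q) := by
  rcases eq_or_ne p p' with rfl | hne
  · exact hr
  · exact hr.tail ⟨fun hc => hne (congrArg Prod.fst hc), Or.inl ⟨rfl, hle⟩⟩

private lemma row_step' {n m : ℕ} {M : Matrix (Fin n) (Fin m) ℝ}
    {h : Fin n × Fin m} {p : Fin n} {q q' : Fin m}
    (hr : Relation.ReflTransGen (PrefArc M) h (p, q)) (hle : M p q' ≤ M p q) :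
    Relation.ReflTransGen (PrefArc M) h (p, q') := by
  rcases eq_or_ne q q' with rfl | hne
  · exact hr
  · exact hr.tail ⟨fun hc => hne (congrArg Prod.snd hc), Or.inr ⟨rfl, hle⟩⟩

/-- In a zero-sum game, the support of a Nash equilibrium is contained in the
sink component of the preference graph. -/
theorem nash_support_in_sink_component {n m : ℕ}
    (M : Matrix (Fin n) (Fin m) ℝ)
    (x : Fin n → ℝ) (y : Fin m → ℝ)
    (hx : ∀ s, 0 ≤ x s) (hxsum : ∑ s, x s = 1)
    (hy : ∀ t, 0 ≤ y t) (hysum : ∑ t, y t = 1)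
    (hnash1 : ∀ s : Fin n, (M.mulVec y) s ≤ x ⬝ᵥ M.mulVec y)
    (hnash2 : ∀ t : Fin m, x ⬝ᵥ M.mulVec y ≤ (Mᵀ.mulVec x) t)
    (H : Finset (Fin n × Fin m)) (hH : IsSinkComponent (PrefArc M) H) :
    ∀ s : Fin n, 0 < x s → ∀ t : Fin m, 0 < y t → (s, t) ∈ H := by
  classical
  obtain ⟨h0, hh0⟩ := hH.1
  intro s hs t ht
  set v : ℝ := x ⬝ᵥ M.mulVec y with hvdef
  have hdot : ∑ p, x p * (M.mulVec y) p = v := rfl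
  have hrowfun : ∀ p, (M.mulVec y) p = ∑ q, M p q * y q := fun p => rfl
  have hcolfun : ∀ q, (Mᵀ.mulVec x) q = ∑ p, M p q * x p := fun q => rfl
  -- equality on support rows
  have hrow_eq : ∀ p, 0 < x p → ∑ q, M p q * y q = v := by
    intro p hp
    rw [← hrowfun]
    exact eq_of_le_avg' x (fun p => (M.mulVec y) p) v hx hxsum hnash1 hdot p hp
  have hswap : ∑ q, y q * (∑ p, M p q * x p) = v := by
    calc ∑ q, y q * (∑ p, M p q * x p) = ∑ q, ∑ p, x p * (M p q * y q) := by
          refine Finset.sum_congr rfl fun q _ => ?_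
          rw [Finset.mul_sum]
          exact Finset.sum_congr rfl fun p _ => by ring
      _ = ∑ p, ∑ q, x p * (M p q * y q) := Finset.sum_comm
      _ = ∑ p, x p * (M.mulVec y) p := by
          refine Finset.sum_congr rfl fun p _ => ?_
          rw [hrowfun, Finset.mul_sum]
      _ = v := hdot
  have hcol_eq : ∀ q, 0 < y q → ∑ p, M p q * x p = v := by
    intro q hq
    exact eq_of_ge_avg' y (fun q => ∑ p, M p q * x p) v hy hysum
      (fun q => le_of_le_of_eq (hnash2 q) (hcolfun q)) hswap q hq
  -- closure of H under reachability from h0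
  have closure : ∀ z, Relation.ReflTransGen (PrefArc M) h0 z → z ∈ H := by
    intro z hz
    induction hz with
    | refl => exact hh0
    | tail _ harc ih => exact hH.2.2 _ ih _ harc
  -- base path: reach a support profile with value ≤ v
  obtain ⟨b2, _, hb2min⟩ := Finset.exists_min_image Finset.univ (fun q => M h0.1 q)
    ⟨t, Finset.mem_univ t⟩
  have hreach1 : Relation.ReflTransGen (PrefArc M) h0 (h0.1, b2) := by
    refine row_step' (p := h0.1) (q := h0.2) ?_ (hb2min h0.2 (Finset.mem_univ _))
    simpa using Relation.ReflTransGen.refl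
  have hb2v : M h0.1 b2 ≤ v := by
    have h1 : M h0.1 b2 * 1 ≤ ∑ q, M h0.1 q * y q := by
      rw [← hysum, Finset.mul_sum]
      exact Finset.sum_le_sum fun q _ =>
        mul_le_mul_of_nonneg_right (hb2min q (Finset.mem_univ q)) (hy q)
    have h2 := hnash1 h0.1
    rw [hrowfun] at h2
    linarith
  obtain ⟨a3, ha3x, ha3v⟩ : ∃ p, 0 < x p ∧ v ≤ M p b2 := by
    refine exists_supp_ge' x (fun p => M p b2) v hx hxsum ?_
    show v ≤ ∑ p, x p * M p b2
    have := hnash2 b2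
    rw [hcolfun] at this
    have heq : ∑ p, x p * M p b2 = ∑ p, M p b2 * x p := Finset.sum_congr rfl fun p _ => mul_comm _ _
    rw [heq]; exact this
  have hreach2 : Relation.ReflTransGen (PrefArc M) h0 (a3, b2) :=
    col_step' hreach1 (le_trans hb2v ha3v)
  obtain ⟨b3, hb3y, hb3v⟩ : ∃ q, 0 < y q ∧ M a3 q ≤ v := by
    refine exists_supp_le' y (fun q => M a3 q) v hy hysum ?_
    show ∑ q, y q * M a3 q ≤ v
    have : ∑ q, y q * M a3 q = v := by
      calc ∑ q, y q * M a3 q = ∑ q, M a3 q * y q := Finset.sum_congr rfl fun q _ => mul_comm _ _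
        _ = v := hrow_eq a3 ha3x
    linarith
  have hreach3 : Relation.ReflTransGen (PrefArc M) h0 (a3, b3) :=
    row_step' hreach2 (le_trans hb3v ha3v)
  -- "good" rows and columns
  set Rg : Fin n → Prop := fun p => 0 < x p ∧
    ∃ q, 0 < y q ∧ v ≤ M p q ∧ Relation.ReflTransGen (PrefArc M) h0 (p, q) with hRgdef
  set Cg : Fin m → Prop := fun q => 0 < y q ∧
    ∃ p, 0 < x p ∧ M p q ≤ v ∧ Relation.ReflTransGen (PrefArc M) h0 (p, q) with hCgdef
  have T1 : ∀ p q, Cg q → 0 < x p → v ≤ M p q → Rg p := by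
    rintro p q ⟨hqy, p0, hp0, hle, hr⟩ hp hvle
    exact ⟨hp, q, hqy, hvle, col_step' hr (le_trans hle hvle)⟩
  have T2 : ∀ p q, Rg p → 0 < y q → M p q ≤ v → Cg q := by
    rintro p q ⟨hpx, q0, hq0, hge, hr⟩ hq hlev
    exact ⟨hq, p, hpx, hlev, row_step' hr (le_trans hlev hge)⟩
  have hCb3 : Cg b3 := ⟨hb3y, a3, ha3x, hb3v, hreach3⟩
  obtain ⟨p1, hp1x, hp1v⟩ : ∃ p, 0 < x p ∧ v ≤ M p b3 := by
    refine exists_supp_ge' x (fun p => M p b3) v hx hxsum ?_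
    show v ≤ ∑ p, x p * M p b3
    have : ∑ p, x p * M p b3 = v := by
      calc ∑ p, x p * M p b3 = ∑ p, M p b3 * x p := Finset.sum_congr rfl fun p _ => mul_comm _ _
        _ = v := hcol_eq b3 hb3y
    linarith
  have hRp1 : Rg p1 := T1 p1 b3 hCb3 hp1x hp1v
  -- connectivity: all support rows and columns are good
  have hall : (∀ p, 0 < x p → Rg p) ∧ (∀ q, 0 < y q → Cg q) := by
    by_contra hcon
    rw [not_and_or] at hcon
    push_neg at hcon
    set Sx : Finset (Fin n) := Finset.univ.filter (fun p => 0 < x p) with hSxdef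
    set Sy : Finset (Fin m) := Finset.univ.filter (fun q => 0 < y q) with hSydef
    set X1 : Finset (Fin n) := Sx.filter Rg with hX1def
    set X2 : Finset (Fin n) := Sx.filter (fun p => ¬ Rg p) with hX2def
    set Y1 : Finset (Fin m) := Sy.filter Cg with hY1def
    set Y2 : Finset (Fin m) := Sy.filter (fun q => ¬ Cg q) with hY2def
    have hSxsum : ∑ p ∈ Sx, x p = 1 := by
      rw [hSxdef, Finset.sum_filter_of_ne fun p _ hne => (hx p).lt_of_ne (Ne.symm hne)]
      exact hxsum
    have hSysum : ∑ q ∈ Sy, y q = 1 := by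
      rw [hSydef, Finset.sum_filter_of_ne fun q _ hne => (hy q).lt_of_ne (Ne.symm hne)]
      exact hysum
    have hXsplit : ∑ p ∈ X1, x p + ∑ p ∈ X2, x p = 1 := by
      rw [hX1def, hX2def, Finset.sum_filter_add_sum_filter_not, hSxsum]
    have hYsplit : ∑ q ∈ Y1, y q + ∑ q ∈ Y2, y q = 1 := by
      rw [hY1def, hY2def, Finset.sum_filter_add_sum_filter_not, hSysum]
    have memX1 : ∀ p ∈ X1, 0 < x p ∧ Rg p := by
      intro p hp
      simp only [hX1def, hSxdef, Finset.mem_filter, Finset.mem_univ, true_and] at hp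
      exact hp
    have memX2 : ∀ p ∈ X2, 0 < x p ∧ ¬ Rg p := by
      intro p hp
      simp only [hX2def, hSxdef, Finset.mem_filter, Finset.mem_univ, true_and] at hp
      exact hp
    have memY1 : ∀ q ∈ Y1, 0 < y q ∧ Cg q := by
      intro q hq
      simp only [hY1def, hSydef, Finset.mem_filter, Finset.mem_univ, true_and] at hq
      exact hq
    have memY2 : ∀ q ∈ Y2, 0 < y q ∧ ¬ Cg q := by
      intro q hq
      simp only [hY2def, hSydef, Finset.mem_filter, Finset.mem_univ, true_and] at hq
      exact hq
    have F1 : ∀ p ∈ X1, ∀ q ∈ Y2, v < M p q := by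
      intro p hp q hq
      by_contra hc
      push_neg at hc
      exact (memY2 q hq).2 (T2 p q (memX1 p hp).2 (memY2 q hq).1 hc)
    have F2 : ∀ p ∈ X2, ∀ q ∈ Y1, M p q < v := by
      intro p hp q hq
      by_contra hc
      push_neg at hc
      exact (memX2 p hp).2 (T1 p q (memY1 q hq).2 (memX2 p hp).1 hc)
    have hX1ne : X1.Nonempty := ⟨p1, by
      simp only [hX1def, hSxdef, Finset.mem_filter, Finset.mem_univ, true_and]
      exact ⟨hp1x, hRp1⟩⟩
    have hY1ne : Y1.Nonempty := ⟨b3, by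
      simp only [hY1def, hSydef, Finset.mem_filter, Finset.mem_univ, true_and]
      exact ⟨hb3y, hCb3⟩⟩
    -- restricted row/column identities
    have hrowS : ∀ p, 0 < x p → ∑ q ∈ Sy, y q * M p q = v := by
      intro p hp
      rw [hSydef, Finset.sum_filter_of_ne fun q _ hne =>
        (hy q).lt_of_ne (Ne.symm (left_ne_zero_of_mul hne))]
      calc ∑ q, y q * M p q = ∑ q, M p q * y q := Finset.sum_congr rfl fun q _ => mul_comm _ _
        _ = v := hrow_eq p hp
    have hcolS : ∀ q, 0 < y q → ∑ p ∈ Sx, x p * M p q = v := by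
      intro q hq
      rw [hSxdef, Finset.sum_filter_of_ne fun p _ hne =>
        (hx p).lt_of_ne (Ne.symm (left_ne_zero_of_mul hne))]
      calc ∑ p, x p * M p q = ∑ p, M p q * x p := Finset.sum_congr rfl fun p _ => mul_comm _ _
        _ = v := hcol_eq q hq
    set A : ℝ := ∑ p ∈ X1, ∑ q ∈ Y1, x p * (y q * M p q) with hAdef
    set B : ℝ := ∑ p ∈ X1, ∑ q ∈ Y2, x p * (y q * M p q) with hBdef
    set C : ℝ := ∑ p ∈ X2, ∑ q ∈ Y1, x p * (y q * M p q) with hCdef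
    set α : ℝ := ∑ p ∈ X1, x p with hadef
    set α2 : ℝ := ∑ p ∈ X2, x p with ha2def
    set β : ℝ := ∑ q ∈ Y1, y q with hbdef
    set β2 : ℝ := ∑ q ∈ Y2, y q with hb2def
    have I1 : A + B = α * v := by
      rw [hAdef, hBdef, ← Finset.sum_add_distrib, hadef, Finset.sum_mul]
      refine Finset.sum_congr rfl fun p hp => ?_
      rw [hY1def, hY2def, Finset.sum_filter_add_sum_filter_not]
      rw [← hrowS p (memX1 p hp).1, Finset.mul_sum]
    have I2 : A + C = β * v := by
      have hA' : A = ∑ q ∈ Y1, ∑ p ∈ X1, x p * (y q * M p q) := Finset.sum_comm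
      have hC' : C = ∑ q ∈ Y1, ∑ p ∈ X2, x p * (y q * M p q) := Finset.sum_comm
      rw [hA', hC', ← Finset.sum_add_distrib, hbdef, Finset.sum_mul]
      refine Finset.sum_congr rfl fun q hq => ?_
      rw [hX1def, hX2def, Finset.sum_filter_add_sum_filter_not]
      rw [← hcolS q (memY1 q hq).1, Finset.mul_sum]
      exact Finset.sum_congr rfl fun p _ => by ring
    -- bounds
    have hBsum : ∑ p ∈ X1, ∑ q ∈ Y2, x p * (y q * v) = α * (β2 * v) := by
      rw [hadef, Finset.sum_mul]
      refine Finset.sum_congr rfl fun p _ => ?_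
      rw [hb2def, Finset.sum_mul, Finset.mul_sum]
    have hCsum : ∑ p ∈ X2, ∑ q ∈ Y1, x p * (y q * v) = α2 * (β * v) := by
      rw [ha2def, Finset.sum_mul]
      refine Finset.sum_congr rfl fun p _ => ?_
      rw [hbdef, Finset.sum_mul, Finset.mul_sum]
    have hBge : α * (β2 * v) ≤ B := by
      rw [← hBsum, hBdef]
      refine Finset.sum_le_sum fun p hp => Finset.sum_le_sum fun q hq => ?_
      exact mul_le_mul_of_nonneg_left
        (mul_le_mul_of_nonneg_left (le_of_lt (F1 p hp q hq)) (hy q)) (hx p)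
    have hCle : C ≤ α2 * (β * v) := by
      rw [← hCsum, hCdef]
      refine Finset.sum_le_sum fun p hp => Finset.sum_le_sum fun q hq => ?_
      exact mul_le_mul_of_nonneg_left
        (mul_le_mul_of_nonneg_left (le_of_lt (F2 p hp q hq)) (hy q)) (hx p)
    have halg : α * (β2 * v) - α2 * (β * v) = α * v - β * v := by
      have h1 : α2 = 1 - α := by linarith
      have h2 : β2 = 1 - β := by linarith
      rw [h1, h2]; ring
    -- strictness depending on which side fails
    rcases hcon with ⟨p, hp, hnp⟩ | ⟨q, hq, hnq⟩
    · -- X2 nonempty, C strictly smaller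
      have hpX2 : p ∈ X2 := by
        simp only [hX2def, hSxdef, Finset.mem_filter, Finset.mem_univ, true_and]
        exact ⟨hp, hnp⟩
      have hClt : C < α2 * (β * v) := by
        rw [← hCsum, hCdef]
        refine Finset.sum_lt_sum (fun p' hp' => Finset.sum_le_sum fun q' hq' =>
          mul_le_mul_of_nonneg_left
            (mul_le_mul_of_nonneg_left (le_of_lt (F2 p' hp' q' hq')) (hy q')) (hx p'))
          ⟨p, hpX2, ?_⟩
        refine Finset.sum_lt_sum_of_nonempty hY1ne fun q' hq' => ?_
        have := F2 p hpX2 q' hq'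
        have hyq' := (memY1 q' hq').1
        have hxp := (memX2 p hpX2).1
        exact mul_lt_mul_of_pos_left (mul_lt_mul_of_pos_left this hyq') hxp
      linarith
    · -- Y2 nonempty, B strictly bigger
      have hqY2 : q ∈ Y2 := by
        simp only [hY2def, hSydef, Finset.mem_filter, Finset.mem_univ, true_and]
        exact ⟨hq, hnq⟩
      have hBlt : α * (β2 * v) < B := by
        rw [← hBsum, hBdef]
        refine Finset.sum_lt_sum (fun p' hp' => Finset.sum_le_sum fun q' hq' =>
          mul_le_mul_of_nonneg_left
            (mul_le_mul_of_nonneg_left (le_of_lt (F1 p' hp' q' hq')) (hy q')) (hx p'))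
          ?_
        obtain ⟨p', hp'⟩ := hX1ne
        refine ⟨p', hp', ?_⟩
        refine Finset.sum_lt_sum (fun q' hq' => mul_le_mul_of_nonneg_left
          (mul_le_mul_of_nonneg_left (le_of_lt (F1 p' hp' q' hq')) (hy q')) (hx p'))
          ⟨q, hqY2, ?_⟩
        exact mul_lt_mul_of_pos_left
          (mul_lt_mul_of_pos_left (F1 p' hp' q hqY2) (memY2 q hqY2).1) (memX1 p' hp').1
      linarith
  -- finish
  obtain ⟨hRall, hCall⟩ := hall
  rcases le_total (M s t) v with hc | hc
  · obtain ⟨_, q0, hq0, hq0v, hr⟩ := hRall s hs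
    exact closure _ (row_step' hr (le_trans hc hq0v))
  · obtain ⟨_, p0, hp0, hp0v, hr⟩ := hCall t ht
    exact closure _ (col_step' hr (le_trans hp0v hc))
end

section
/- Let M : Matrix (Fin n) (Fin m) ℝ be a zero-sum game and let (x, y) be a Nash equilibrium of M. Let K = {p : Fin n × Fin m | x p.1 > 0 ∧ y p.2 > 0} be the support subgame of the equilibrium. Then the subgraph of the preference (response) graph induced on K is strongly connected: for all p, q ∈ K, q is reachable from p under the reflexive-transitive closure of the restricted arc relation r' p' q' := (arc p'→q') ∧ p' ∈ K ∧ q' ∈ K. -/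
/-!
Let `v = x ⬝ᵥ M *ᵥ y` and let `R` be the set of profiles reachable from `p` inside the support
`K`. No arc leaves `R` within `K`, so in every support row the entries of `M` on `R` lie strictly
below the other support entries, and in every support column strictly above them. The row player
is indifferent over her support, so the `y`-weighted sum of `M s t - v` over the `R`-part of a
support row is `≤ 0`, and `< 0` if the row also meets `K \ R`; dually, column sums are `≥ 0`.
Summing `x s * y t * (M s t - v)` over `R` by rows and by columns shows that it vanishes, so `R`
splits no support row or column. Hence `(p.1, q.2) ∈ R`, and then `q ∈ R`.
-/

open Matrix

open Finset

section Slackness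

variable {ι : Type*} [Fintype ι] {w f : ι → ℝ}

theorem sum_mul_sub_const (hw : ∑ i, w i = 1) (c : ℝ) :
    ∑ i, w i * (f i - c) = w ⬝ᵥ f - c := by
  simp only [mul_sub, sum_sub_distrib, ← sum_mul, hw, one_mul, dotProduct]

theorem eq_of_le_of_dotProduct_eq {c : ℝ} (hw : ∀ i, 0 ≤ w i) (hwsum : ∑ i, w i = 1)
    (hf : ∀ i, f i ≤ c) (hc : w ⬝ᵥ f = c) {i : ι} (hi : 0 < w i) : f i = c := by
  have hsum : ∑ j, w j * (f j - c) = 0 := by rw [sum_mul_sub_const hwsum, hc, sub_self]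
  have hterm := (sum_eq_zero_iff_of_nonpos fun j _ =>
    mul_nonpos_of_nonneg_of_nonpos (hw j) (sub_nonpos.2 (hf j))).1 hsum i (mem_univ i)
  exact sub_eq_zero.1 ((mul_eq_zero.1 hterm).resolve_left hi.ne')

end Slackness

section Equilibrium

variable {ι κ : Type*} [Fintype ι] [Fintype κ] {M : Matrix ι κ ℝ} {x : ι → ℝ} {y : κ → ℝ}

theorem sum_mul_sub_value_row_eq_zero (hx : ∀ s, 0 ≤ x s) (hxsum : ∑ s, x s = 1)
    (hysum : ∑ t, y t = 1) (hnash : ∀ s, (M *ᵥ y) s ≤ x ⬝ᵥ M *ᵥ y) {s : ι} (hs : 0 < x s) :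
    ∑ t, y t * (M s t - x ⬝ᵥ M *ᵥ y) = 0 := by
  rw [sum_mul_sub_const hysum, dotProduct_comm, sub_eq_zero]
  exact eq_of_le_of_dotProduct_eq hx hxsum hnash rfl hs

theorem sum_mul_sub_value_col_eq_zero (hy : ∀ t, 0 ≤ y t) (hxsum : ∑ s, x s = 1)
    (hysum : ∑ t, y t = 1) (hnash : ∀ t, x ⬝ᵥ M *ᵥ y ≤ (Mᵀ *ᵥ x) t) {t : κ} (ht : 0 < y t) :
    ∑ s, x s * (M s t - x ⬝ᵥ M *ᵥ y) = 0 := by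
  have hvalue : y ⬝ᵥ Mᵀ *ᵥ x = x ⬝ᵥ M *ᵥ y := by
    rw [mulVec_transpose, dotProduct_comm, dotProduct_mulVec]
  rw [sum_mul_sub_const hxsum, dotProduct_comm, sub_eq_zero]
  exact neg_inj.1 (eq_of_le_of_dotProduct_eq (f := -(Mᵀ *ᵥ x)) hy hysum
    (fun t => neg_le_neg (hnash t)) (by rw [dotProduct_neg, hvalue]) ht)

end Equilibrium

section ThresholdSums

variable {ι : Type*} {P : ι → Prop} {w g : ι → ℝ}

theorem mul_nonneg_of_not_of_nonneg (hw : ∀ t, 0 ≤ w t)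
    (hlt : ∀ t t', P t → 0 < w t' → ¬ P t' → g t < g t') {t₀ t : ι} (h₀ : P t₀)
    (hg₀ : 0 ≤ g t₀) (ht : ¬ P t) : 0 ≤ w t * g t := by
  rcases (hw t).eq_or_lt with h0 | h0
  · simp [← h0]
  · exact mul_nonneg h0.le (hg₀.trans (hlt t₀ t h₀ h0 ht).le)

variable [Fintype ι] [DecidablePred P]

theorem sum_filter_mul_nonpos (hw : ∀ t, 0 ≤ w t) (hg : ∑ t, w t * g t = 0)
    (hlt : ∀ t t', P t → 0 < w t' → ¬ P t' → g t < g t') :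
    ∑ t with P t, w t * g t ≤ 0 := by
  have hsplit := sum_filter_add_sum_filter_not univ P fun t => w t * g t
  by_cases hneg : ∀ t, P t → g t ≤ 0
  · exact sum_nonpos fun t ht =>
      mul_nonpos_of_nonneg_of_nonpos (hw t) (hneg t (mem_filter.1 ht).2)
  · push Not at hneg
    obtain ⟨t₀, h₀, hg₀⟩ := hneg
    have : 0 ≤ ∑ t with ¬ P t, w t * g t := sum_nonneg fun t ht =>
      mul_nonneg_of_not_of_nonneg hw hlt h₀ hg₀.le (mem_filter.1 ht).2
    linarith

theorem sum_filter_mul_neg (hw : ∀ t, 0 ≤ w t) (hg : ∑ t, w t * g t = 0)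
    (hlt : ∀ t t', P t → 0 < w t' → ¬ P t' → g t < g t') {t₁ t₂ : ι} (h₁ : P t₁)
    (hw₁ : 0 < w t₁) (h₂ : ¬ P t₂) (hw₂ : 0 < w t₂) :
    ∑ t with P t, w t * g t < 0 := by
  have hsplit := sum_filter_add_sum_filter_not univ P fun t => w t * g t
  by_cases hneg : ∀ t, P t → g t < 0
  · exact sum_neg'
      (fun t ht => mul_nonpos_of_nonneg_of_nonpos (hw t) (hneg t (mem_filter.1 ht).2).le)
      ⟨t₁, by simpa using h₁, mul_neg_of_pos_of_neg hw₁ (hneg t₁ h₁)⟩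
  · push Not at hneg
    obtain ⟨t₀, h₀, hg₀⟩ := hneg
    have : 0 < ∑ t with ¬ P t, w t * g t := sum_pos'
      (fun t ht => mul_nonneg_of_not_of_nonneg hw hlt h₀ hg₀ (mem_filter.1 ht).2)
      ⟨t₂, by simpa using h₂, mul_pos hw₂ (hg₀.trans_lt (hlt t₀ t₂ h₀ hw₂ h₂))⟩
    linarith

end ThresholdSums

section RectangleSums

variable {ι κ : Type*} [Fintype κ] {r : ι → κ → Prop} [∀ s, DecidablePred (r s)]
  {x : ι → ℝ} {y : κ → ℝ} {G : ι → κ → ℝ}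

theorem mul_sum_filter_mul_nonpos (hx : ∀ s, 0 ≤ x s) (hy : ∀ t, 0 ≤ y t)
    (hrow : ∀ s, 0 < x s → ∑ t, y t * G s t = 0)
    (hlt : ∀ s t t', r s t → 0 < y t' → ¬ r s t' → G s t < G s t') (s : ι) :
    x s * ∑ t with r s t, y t * G s t ≤ 0 := by
  rcases (hx s).eq_or_lt with h0 | h0
  · simp [← h0]
  · exact mul_nonpos_of_nonneg_of_nonpos h0.le (sum_filter_mul_nonpos hy (hrow s h0) (hlt s))

variable [Fintype ι]

theorem sum_mul_sum_filter_comm (x : ι → ℝ) (y : κ → ℝ) (G : ι → κ → ℝ) :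
    ∑ s, x s * ∑ t with r s t, y t * G s t = ∑ t, y t * ∑ s with r s t, x s * G s t := by
  simp only [sum_filter, mul_sum, mul_ite, mul_zero]
  rw [sum_comm]
  exact sum_congr rfl fun t _ => sum_congr rfl fun s _ => by split_ifs <;> ring

theorem sum_mul_sum_filter_mul_nonpos (hx : ∀ s, 0 ≤ x s) (hy : ∀ t, 0 ≤ y t)
    (hrow : ∀ s, 0 < x s → ∑ t, y t * G s t = 0)
    (hlt : ∀ s t t', r s t → 0 < y t' → ¬ r s t' → G s t < G s t') :
    ∑ s, x s * ∑ t with r s t, y t * G s t ≤ 0 :=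
  sum_nonpos fun s _ => mul_sum_filter_mul_nonpos hx hy hrow hlt s

theorem sum_mul_sum_filter_mul_neg (hx : ∀ s, 0 ≤ x s) (hy : ∀ t, 0 ≤ y t)
    (hrow : ∀ s, 0 < x s → ∑ t, y t * G s t = 0)
    (hlt : ∀ s t t', r s t → 0 < y t' → ¬ r s t' → G s t < G s t') {s : ι} {t t' : κ}
    (hs : 0 < x s) (hst : r s t) (ht : 0 < y t) (hst' : ¬ r s t') (ht' : 0 < y t') :
    ∑ s, x s * ∑ t with r s t, y t * G s t < 0 :=
  sum_neg' (fun s _ => mul_sum_filter_mul_nonpos hx hy hrow hlt s)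
    ⟨s, mem_univ s, mul_neg_of_pos_of_neg hs
      (sum_filter_mul_neg hy (hrow s hs) (hlt s) hst ht hst' ht')⟩

theorem rel_of_rel_of_pos (hx : ∀ s, 0 ≤ x s) (hy : ∀ t, 0 ≤ y t)
    (hrow : ∀ s, 0 < x s → ∑ t, y t * G s t = 0) (hcol : ∀ t, 0 < y t → ∑ s, x s * G s t = 0)
    (hsupp : ∀ s t, r s t → 0 < x s ∧ 0 < y t)
    (hrow_lt : ∀ s t t', r s t → 0 < y t' → ¬ r s t' → G s t < G s t')
    (hcol_lt : ∀ s s' t, r s t → 0 < x s' → ¬ r s' t → G s' t < G s t)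
    {s s' : ι} {t t' : κ} (hst : r s t) (hs' : 0 < x s') (ht' : 0 < y t') : r s' t' := by
  have hcol' : ∀ t, 0 < y t → ∑ s, x s * -G s t = 0 := fun t ht => by
    simp only [mul_neg, sum_neg_distrib, hcol t ht, neg_zero]
  have hcol_lt' : ∀ t s s', r s t → 0 < x s' → ¬ r s' t → -G s t < -G s' t :=
    fun t s s' h hx' hn => neg_lt_neg (hcol_lt s s' t h hx' hn)
  have hdual : ∑ t, y t * ∑ s with r s t, x s * -G s t =
      -∑ s, x s * ∑ t with r s t, y t * G s t := by
    rw [sum_mul_sum_filter_comm]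
    simp only [mul_neg, sum_neg_distrib]
  have hge : 0 ≤ ∑ s, x s * ∑ t with r s t, y t * G s t := neg_nonpos.1 <|
    hdual ▸ sum_mul_sum_filter_mul_nonpos (r := fun t s => r s t) hy hx hcol' hcol_lt'
  have hst' : r s t' := by
    by_contra hn
    exact (sum_mul_sum_filter_mul_neg hx hy hrow hrow_lt (hsupp s t hst).1 hst (hsupp s t hst).2
      hn ht').not_ge hge
  by_contra hn
  have hlt := hdual ▸ sum_mul_sum_filter_mul_neg (r := fun t s => r s t) hy hx hcol' hcol_lt'
    (hsupp s t' hst').2 hst' (hsupp s t' hst').1 hn hs'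
  exact (sum_mul_sum_filter_mul_nonpos hx hy hrow hrow_lt).not_gt (neg_neg_iff_pos.1 hlt)

end RectangleSums

section PreferenceGraph

variable {n m : ℕ} {M : Matrix (Fin n) (Fin m) ℝ} {K : Set (Fin n × Fin m)}
  {p : Fin n × Fin m}

def PrefReach (M : Matrix (Fin n) (Fin m) ℝ) (K : Set (Fin n × Fin m)) :
    Fin n × Fin m → Fin n × Fin m → Prop :=
  Relation.ReflTransGen fun a b => PrefArc M a b ∧ a ∈ K ∧ b ∈ K

theorem PrefReach.mem {q : Fin n × Fin m} (h : PrefReach M K p q) (hp : p ∈ K) : q ∈ K := by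
  rcases h.cases_tail with rfl | ⟨_, -, -, -, hq⟩
  exacts [hp, hq]

theorem PrefReach.lt_of_not_row {s : Fin n} {t t' : Fin m} (h : PrefReach M K p (s, t))
    (hK : (s, t) ∈ K) (hK' : (s, t') ∈ K) (hn : ¬ PrefReach M K p (s, t')) :
    M s t < M s t' :=
  lt_of_not_ge fun hle =>
    hn (h.tail ⟨⟨fun heq => hn (heq ▸ h), Or.inr ⟨rfl, hle⟩⟩, hK, hK'⟩)

theorem PrefReach.lt_of_not_col {s s' : Fin n} {t : Fin m} (h : PrefReach M K p (s, t))
    (hK : (s, t) ∈ K) (hK' : (s', t) ∈ K) (hn : ¬ PrefReach M K p (s', t)) :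
    M s' t < M s t :=
  lt_of_not_ge fun hle =>
    hn (h.tail ⟨⟨fun heq => hn (heq ▸ h), Or.inl ⟨rfl, hle⟩⟩, hK, hK'⟩)

end PreferenceGraph

/-- In a zero-sum game, the subgraph of the preference graph induced on the
support subgame of a Nash equilibrium is strongly connected. -/
theorem nash_support_strongly_connected {n m : ℕ}
    (M : Matrix (Fin n) (Fin m) ℝ)
    (x : Fin n → ℝ) (y : Fin m → ℝ)
    (hx : ∀ s, 0 ≤ x s) (hxsum : ∑ s, x s = 1)
    (hy : ∀ t, 0 ≤ y t) (hysum : ∑ t, y t = 1)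
    (hnash1 : ∀ s : Fin n, (M.mulVec y) s ≤ x ⬝ᵥ M.mulVec y)
    (hnash2 : ∀ t : Fin m, x ⬝ᵥ M.mulVec y ≤ (Mᵀ.mulVec x) t)
    (K : Set (Fin n × Fin m)) (hK : K = {p : Fin n × Fin m | 0 < x p.1 ∧ 0 < y p.2}) :
    ∀ p ∈ K, ∀ q ∈ K,
      Relation.ReflTransGen (fun p' q' => PrefArc M p' q' ∧ p' ∈ K ∧ q' ∈ K) p q := by
  classical
  intro p hp q hq
  have hmem : ∀ s t, (s, t) ∈ K ↔ 0 < x s ∧ 0 < y t := by simp [hK]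
  have hsupp : ∀ s t, PrefReach M K p (s, t) → 0 < x s ∧ 0 < y t :=
    fun s t h => (hmem s t).1 (h.mem hp)
  obtain ⟨hq₁, hq₂⟩ := (hmem q.1 q.2).1 hq
  exact rel_of_rel_of_pos (r := fun s t => PrefReach M K p (s, t))
    (G := fun s t => M s t - x ⬝ᵥ M *ᵥ y) hx hy
    (fun _ => sum_mul_sub_value_row_eq_zero hx hxsum hysum hnash1)
    (fun _ => sum_mul_sub_value_col_eq_zero hy hxsum hysum hnash2) hsupp
    (fun s t _ h ht' hn => sub_lt_sub_right (h.lt_of_not_row ((hmem s t).2 (hsupp s t h))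
      ((hmem s _).2 ⟨(hsupp s t h).1, ht'⟩) hn) _)
    (fun s _ t h hs' hn => sub_lt_sub_right (h.lt_of_not_col ((hmem s t).2 (hsupp s t h))
      ((hmem _ t).2 ⟨hs', (hsupp s t h).2⟩) hn) _)
    Relation.ReflTransGen.refl hq₁ hq₂
end

section
/- Let M : Matrix (Fin n) (Fin m) ℝ be a zero-sum game admitting a fully-mixed Nash equilibrium: a Nash equilibrium (x, y) with x s > 0 for all s : Fin n and y t > 0 for all t : Fin m. Then the preference (response) graph of M is strongly connected: for all profiles p, q : Fin n × Fin m, q is reachable from p under the reflexive-transitive closure of the arc relation. -/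
open Matrix

private lemma prefStepCol {n m : ℕ} (M : Matrix (Fin n) (Fin m) ℝ) {a b : Fin n} {t : Fin m}
    (h : M a t ≤ M b t) : Relation.ReflTransGen (PrefArc M) (a, t) (b, t) := by
  by_cases hab : a = b
  · subst hab; exact Relation.ReflTransGen.refl
  · exact Relation.ReflTransGen.single
      ⟨by simp [Prod.ext_iff, hab], Or.inl ⟨rfl, h⟩⟩

private lemma prefStepRow {n m : ℕ} (M : Matrix (Fin n) (Fin m) ℝ) {s : Fin n} {a b : Fin m}
    (h : M s b ≤ M s a) : Relation.ReflTransGen (PrefArc M) (s, a) (s, b) := by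
  by_cases hab : a = b
  · subst hab; exact Relation.ReflTransGen.refl
  · exact Relation.ReflTransGen.single
      ⟨by simp [Prod.ext_iff, hab], Or.inr ⟨rfl, h⟩⟩

/-- product sum of weights times a constant -/
private lemma prodsum_const {n m : ℕ} (x : Fin n → ℝ) (y : Fin m → ℝ) (v : ℝ)
    (S : Finset (Fin n)) (T : Finset (Fin m)) :
    ∑ s ∈ S, ∑ t ∈ T, x s * (y t * v) = (∑ s ∈ S, x s) * (∑ t ∈ T, y t) * v := by
  calc ∑ s ∈ S, ∑ t ∈ T, x s * (y t * v)
      = ∑ s ∈ S, x s * ((∑ t ∈ T, y t) * v) := by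
        refine Finset.sum_congr rfl fun s _ => ?_
        rw [Finset.sum_mul, Finset.mul_sum]
    _ = (∑ s ∈ S, x s) * (∑ t ∈ T, y t) * v := by
        rw [← Finset.sum_mul, ← mul_assoc]

/-- The key counting lemma: a "closed" pair of sets (R, C) with strict preferences
across the boundary cannot have a nonempty side and a nonfull other side. -/
private lemma core_ineq {n m : ℕ} (M : Matrix (Fin n) (Fin m) ℝ)
    (x : Fin n → ℝ) (y : Fin m → ℝ) (hx : ∀ s, 0 < x s) (hy : ∀ t, 0 < y t)
    (hxsum : ∑ s, x s = 1) (hysum : ∑ t, y t = 1)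
    (v : ℝ) (hrow : ∀ s, ∑ t, y t * M s t = v) (hcol : ∀ t, ∑ s, x s * M s t = v)
    (R : Finset (Fin n)) (C : Finset (Fin m))
    (hRC : ∀ s ∈ R, ∀ t ∈ Cᶜ, v < M s t)
    (hCR : ∀ t ∈ C, ∀ s ∈ Rᶜ, M s t < v) :
    ¬(R.Nonempty ∧ Cᶜ.Nonempty) ∧ ¬(C.Nonempty ∧ Rᶜ.Nonempty) := by
  set A := ∑ s ∈ R, x s with hA
  set B := ∑ t ∈ C, y t with hB
  set g : Fin n → Fin m → ℝ := fun s t => x s * (y t * M s t) with hg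
  set q1 := ∑ s ∈ R, ∑ t ∈ C, g s t with hq1
  set q2 := ∑ s ∈ R, ∑ t ∈ Cᶜ, g s t with hq2
  set q3 := ∑ s ∈ Rᶜ, ∑ t ∈ C, g s t with hq3
  have hBc : ∑ t ∈ Cᶜ, y t = 1 - B := by
    have := Finset.sum_add_sum_compl C y
    rw [hysum] at this; linarith
  have hAc : ∑ s ∈ Rᶜ, x s = 1 - A := by
    have := Finset.sum_add_sum_compl R x
    rw [hxsum] at this; linarith
  have e1 : q1 + q2 = v * A := by
    rw [hq1, hq2, ← Finset.sum_add_distrib]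
    have : ∀ s ∈ R, (∑ t ∈ C, g s t) + (∑ t ∈ Cᶜ, g s t) = x s * v := by
      intro s _
      rw [Finset.sum_add_sum_compl, hg]
      simp only
      rw [← Finset.mul_sum, hrow]
    rw [Finset.sum_congr rfl this, ← Finset.sum_mul, ← hA]; ring
  have e2 : q1 + q3 = v * B := by
    have hswap : ∀ (S : Finset (Fin n)), ∑ s ∈ S, ∑ t ∈ C, g s t = ∑ t ∈ C, ∑ s ∈ S, g s t :=
      fun S => Finset.sum_comm
    rw [hq1, hq3, hswap, hswap, ← Finset.sum_add_distrib]
    have : ∀ t ∈ C, (∑ s ∈ R, g s t) + (∑ s ∈ Rᶜ, g s t) = y t * v := by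
      intro t _
      rw [Finset.sum_add_sum_compl, hg]
      have : ∑ s, x s * (y t * M s t) = y t * ∑ s, x s * M s t := by
        rw [Finset.mul_sum]
        exact Finset.sum_congr rfl fun s _ => by ring
      simp only
      rw [this, hcol]
    rw [Finset.sum_congr rfl this, ← Finset.sum_mul, ← hB]; ring
  have wk2 : A * (∑ t ∈ Cᶜ, y t) * v ≤ q2 := by
    rw [← prodsum_const x y v R Cᶜ, hq2]
    refine Finset.sum_le_sum fun s hs => Finset.sum_le_sum fun t ht => ?_
    have h1 := (hRC s hs t ht).le
    have hxs := (hx s).le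
    have hyt := (hy t).le
    exact mul_le_mul_of_nonneg_left (mul_le_mul_of_nonneg_left h1 hyt) hxs
  have wk3 : q3 ≤ (∑ s ∈ Rᶜ, x s) * B * v := by
    have : (∑ s ∈ Rᶜ, x s) * B * v = ∑ s ∈ Rᶜ, ∑ t ∈ C, x s * (y t * v) := by
      rw [prodsum_const]
    rw [this, hq3]
    refine Finset.sum_le_sum fun s hs => Finset.sum_le_sum fun t ht => ?_
    have h1 := (hCR t ht s hs).le
    have hxs := (hx s).le
    have hyt := (hy t).le
    exact mul_le_mul_of_nonneg_left (mul_le_mul_of_nonneg_left h1 hyt) hxs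
  constructor
  · rintro ⟨hR, hC⟩
    -- strict version of wk2
    have st2 : A * (∑ t ∈ Cᶜ, y t) * v < q2 := by
      rw [← prodsum_const x y v R Cᶜ, hq2]
      refine Finset.sum_lt_sum_of_nonempty hR fun s hs => ?_
      refine Finset.sum_lt_sum_of_nonempty hC fun t ht => ?_
      have h1 := hRC s hs t ht
      have hxs := hx s
      have hyt := hy t
      exact mul_lt_mul_of_pos_left (mul_lt_mul_of_pos_left h1 hyt) hxs
    rw [hBc] at st2
    rw [hAc] at wk3
    nlinarith [wk3, st2, e1, e2]
  · rintro ⟨hC, hR⟩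
    have st3 : q3 < (∑ s ∈ Rᶜ, x s) * B * v := by
      have : (∑ s ∈ Rᶜ, x s) * B * v = ∑ s ∈ Rᶜ, ∑ t ∈ C, x s * (y t * v) := by
        rw [prodsum_const]
      rw [this, hq3]
      refine Finset.sum_lt_sum_of_nonempty hR fun s hs => ?_
      refine Finset.sum_lt_sum_of_nonempty hC fun t ht => ?_
      have h1 := hCR t ht s hs
      have hxs := hx s
      have hyt := hy t
      exact mul_lt_mul_of_pos_left (mul_lt_mul_of_pos_left h1 hyt) hxs
    rw [hBc] at wk2
    rw [hAc] at st3
    nlinarith [wk2, st3, e1, e2]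

/-- If a zero-sum game admits a fully-mixed Nash equilibrium, then its
preference (response) graph is strongly connected. -/
theorem fully_mixed_nash_implies_strongly_connected {n m : ℕ}
    (M : Matrix (Fin n) (Fin m) ℝ)
    (x : Fin n → ℝ) (y : Fin m → ℝ)
    (hx : ∀ s, 0 < x s) (hxsum : ∑ s, x s = 1)
    (hy : ∀ t, 0 < y t) (hysum : ∑ t, y t = 1)
    (hnash1 : ∀ s : Fin n, (M.mulVec y) s ≤ x ⬝ᵥ M.mulVec y)
    (hnash2 : ∀ t : Fin m, x ⬝ᵥ M.mulVec y ≤ (Mᵀ.mulVec x) t) :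
    ∀ p q : Fin n × Fin m, Relation.ReflTransGen (PrefArc M) p q := by
  classical
  intro p q
  set v := x ⬝ᵥ M.mulVec y with hv
  -- every row has value v against y
  have hrowv : ∀ s, (M.mulVec y) s = v := by
    have hsum : ∑ s, x s * (M.mulVec y) s = ∑ s, x s * v := by
      rw [← Finset.sum_mul, hxsum, one_mul]
      rfl
    have := (Finset.sum_eq_sum_iff_of_le
      (fun s _ => mul_le_mul_of_nonneg_left (hnash1 s) (hx s).le)).mp hsum
    intro s
    have h := this s (Finset.mem_univ s)
    exact mul_left_cancel₀ (ne_of_gt (hx s)) h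
  have hcolv : ∀ t, (Mᵀ.mulVec x) t = v := by
    have hvy : ∑ t, y t * (Mᵀ.mulVec x) t = v := by
      simp only [mulVec, dotProduct, transpose_apply, Finset.mul_sum]
      rw [Finset.sum_comm]
      simp only [hv, dotProduct, mulVec, Finset.mul_sum]
      exact Finset.sum_congr rfl fun s _ => Finset.sum_congr rfl fun t _ => by ring
    have hsum : ∑ t, y t * v = ∑ t, y t * (Mᵀ.mulVec x) t := by
      rw [hvy, ← Finset.sum_mul, hysum, one_mul]
    have := (Finset.sum_eq_sum_iff_of_le
      (fun t _ => mul_le_mul_of_nonneg_left (hnash2 t) (hy t).le)).mp hsum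
    intro t
    have h := this t (Finset.mem_univ t)
    exact (mul_left_cancel₀ (ne_of_gt (hy t)) h).symm
  have hrow : ∀ s, ∑ t, y t * M s t = v := by
    intro s
    have := hrowv s
    simp only [mulVec, dotProduct] at this
    rw [← this]
    exact Finset.sum_congr rfl fun t _ => by ring
  have hcol : ∀ t, ∑ s, x s * M s t = v := by
    intro t
    have := hcolv t
    simp only [mulVec, dotProduct, transpose_apply] at this
    rw [← this]
    exact Finset.sum_congr rfl fun s _ => by ring
  -- reachability sets
  set Reach := Relation.ReflTransGen (PrefArc M) with hReach
  set R : Finset (Fin n) := Finset.univ.filter (fun s => ∃ t0, v ≤ M s t0 ∧ Reach p (s, t0))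
    with hRdef
  set C : Finset (Fin m) := Finset.univ.filter (fun t => ∃ a, M a t ≤ v ∧ Reach p (a, t))
    with hCdef
  have hmemR : ∀ s, s ∈ R ↔ ∃ t0, v ≤ M s t0 ∧ Reach p (s, t0) := by
    intro s; simp [hRdef]
  have hmemC : ∀ t, t ∈ C ↔ ∃ a, M a t ≤ v ∧ Reach p (a, t) := by
    intro t; simp [hCdef]
  -- closedness
  have hRC : ∀ s ∈ R, ∀ t ∈ Cᶜ, v < M s t := by
    intro s hs t ht
    by_contra hle
    push_neg at hle
    obtain ⟨t0, hvt0, hreach⟩ := (hmemR s).mp hs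
    have : t ∈ C := (hmemC t).mpr ⟨s, hle, hreach.trans (prefStepRow M (hle.trans hvt0))⟩
    exact (Finset.mem_compl.mp ht) this
  have hCR : ∀ t ∈ C, ∀ s ∈ Rᶜ, M s t < v := by
    intro t ht s hs
    by_contra hle
    push_neg at hle
    obtain ⟨a, hat, hreach⟩ := (hmemC t).mp ht
    have : s ∈ R := (hmemR s).mpr ⟨t, hle, hreach.trans (prefStepCol M (hat.trans hle))⟩
    exact (Finset.mem_compl.mp hs) this
  have hcore := core_ineq M x y hx hy hxsum hysum v hrow hcol R C hRC hCR
  -- R is nonempty: climb to the max of column p.2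
  have hRne : R.Nonempty := by
    obtain ⟨s1, -, hs1⟩ := Finset.exists_max_image Finset.univ (fun a => M a p.2)
      ⟨p.1, Finset.mem_univ _⟩
    have hs1max : ∀ a, M a p.2 ≤ M s1 p.2 := fun a => hs1 a (Finset.mem_univ a)
    have hv1 : v ≤ M s1 p.2 := by
      rw [← hcol p.2]
      calc ∑ s, x s * M s p.2 ≤ ∑ s, x s * M s1 p.2 :=
            Finset.sum_le_sum fun a _ => mul_le_mul_of_nonneg_left (hs1max a) (hx a).le
        _ = M s1 p.2 := by rw [← Finset.sum_mul, hxsum, one_mul]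
    exact ⟨s1, (hmemR s1).mpr ⟨p.2, hv1, prefStepCol M (hs1max p.1)⟩⟩
  -- hence C = univ and R = univ
  have hCuniv : C = Finset.univ := by
    by_contra h
    obtain ⟨t, ht⟩ := Finset.nonempty_iff_ne_empty.mpr
      (by simpa [Finset.compl_eq_empty_iff] using h : Cᶜ ≠ ∅)
    exact hcore.1 ⟨hRne, ⟨t, ht⟩⟩
  have hRuniv : R = Finset.univ := by
    by_contra h
    obtain ⟨s, hs⟩ := Finset.nonempty_iff_ne_empty.mpr
      (by simpa [Finset.compl_eq_empty_iff] using h : Rᶜ ≠ ∅)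
    have hCne : C.Nonempty := by rw [hCuniv]; exact ⟨q.2, Finset.mem_univ _⟩
    exact hcore.2 ⟨hCne, ⟨s, hs⟩⟩
  -- conclude
  rcases le_total (M q.1 q.2) v with hqle | hqge
  · have hs : q.1 ∈ R := hRuniv ▸ Finset.mem_univ q.1
    obtain ⟨t0, hvt0, hreach⟩ := (hmemR q.1).mp hs
    exact hreach.trans (by exact_mod_cast prefStepRow M (hqle.trans hvt0))
  · have ht : q.2 ∈ C := hCuniv ▸ Finset.mem_univ q.2
    obtain ⟨a, hat, hreach⟩ := (hmemC q.2).mp ht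
    exact hreach.trans (by exact_mod_cast prefStepCol M (hat.trans hqge))
end

section
/- Let M : Matrix (Fin n) (Fin n) ℝ be antisymmetric (a symmetric zero-sum game) and suppose there exists x : Fin n → ℝ in the probability simplex with x s > 0 for all s and M.mulVec x = 0 (a fully-mixed Nash equilibrium of the symmetric zero-sum game). Then the preference graph of M (arc p→q iff M p q ≤ 0) is strongly connected: for all p, q : Fin n, q is reachable from p under the reflexive-transitive closure of the arc relation. -/
open Matrix

/-- If a symmetric zero-sum game (antisymmetric `M`) admits a fully-mixed Nash
equilibrium (`x` fully mixed in the simplex with `M.mulVec x = 0`), then its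
preference graph (arc `p → q` iff `M p q ≤ 0`) is strongly connected. -/
theorem symmetric_fully_mixed_nash_implies_strongly_connected {n : ℕ}
    (M : Matrix (Fin n) (Fin n) ℝ) (hM : Mᵀ = -M)
    (x : Fin n → ℝ) (hx : ∀ s, 0 < x s) (hxsum : ∑ s, x s = 1)
    (hnash : M.mulVec x = 0) :
    ∀ p q : Fin n, Relation.ReflTransGen (fun p' q' => M p' q' ≤ 0) p q := by
  classical
  intro p q
  by_contra hq
  set r : Fin n → Fin n → Prop := fun p' q' => M p' q' ≤ 0 with hr
  set S : Finset (Fin n) := Finset.univ.filter (fun t => Relation.ReflTransGen r p t) with hS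
  have hpS : p ∈ S := by simp [hS]; exact Relation.ReflTransGen.refl
  have hqS : q ∉ S := by simp [hS]; exact hq
  have hanti : ∀ s t, M t s = -M s t := by
    intro s t
    have := congrFun (congrFun hM s) t
    simpa [Matrix.transpose_apply] using this
  have harc : ∀ s ∈ S, ∀ t ∈ Sᶜ, 0 < M s t := by
    intro s hs t ht
    by_contra h
    push_neg at h
    have hst : Relation.ReflTransGen r p t := by
      have hps : Relation.ReflTransGen r p s := by simpa [hS] using hs
      exact hps.tail h
    simp [hS, hst] at ht
  -- total sum is zero
  have hzero : ∀ s, ∑ t, M s t * x t = 0 := by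
    intro s
    have := congrFun hnash s
    simpa [Matrix.mulVec, dotProduct] using this
  have htot : ∑ s ∈ S, x s * ∑ t, M s t * x t = 0 := by
    simp [hzero]
  have hsplit : ∀ s, x s * ∑ t, M s t * x t =
      (∑ t ∈ S, x s * (M s t * x t)) + ∑ t ∈ Sᶜ, x s * (M s t * x t) := by
    intro s
    rw [Finset.sum_add_sum_compl, Finset.mul_sum]
  have htot2 : (∑ s ∈ S, ∑ t ∈ S, x s * (M s t * x t)) +
      ∑ s ∈ S, ∑ t ∈ Sᶜ, x s * (M s t * x t) = 0 := by
    rw [← Finset.sum_add_distrib]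
    simpa [hsplit] using htot
  have hA : (∑ s ∈ S, ∑ t ∈ S, x s * (M s t * x t)) = 0 := by
    have hswap : (∑ s ∈ S, ∑ t ∈ S, x s * (M s t * x t)) =
        -(∑ s ∈ S, ∑ t ∈ S, x s * (M s t * x t)) := by
      conv_lhs => rw [Finset.sum_comm]
      rw [← Finset.sum_neg_distrib]
      apply Finset.sum_congr rfl
      intro s _
      rw [← Finset.sum_neg_distrib]
      apply Finset.sum_congr rfl
      intro t _
      rw [hanti t s]
      ring
    linarith
  have hB : (∑ s ∈ S, ∑ t ∈ Sᶜ, x s * (M s t * x t)) = 0 := by linarith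
  have hBpos : 0 < ∑ s ∈ S, ∑ t ∈ Sᶜ, x s * (M s t * x t) := by
    apply Finset.sum_pos _ ⟨p, hpS⟩
    intro s hs
    apply Finset.sum_pos _ ⟨q, Finset.mem_compl.mpr hqS⟩
    intro t ht
    have h1 := harc s hs t ht
    have h2 := hx s
    have h3 := hx t
    positivity
  linarith
end

section
/- Let M : Matrix (Fin n) (Fin n) ℝ be antisymmetric, let x be in the probability simplex, and let H be a sink component of the preference graph of M (arc p→q iff M p q ≤ 0). If x is a Nash equilibrium of the symmetric zero-sum game, i.e. (M.mulVec x) s ≤ 0 for all s : Fin n, then (i) the support of x is contained in H: for every s with x s > 0, s ∈ H; and (ii) the subgraph of the preference graph induced on supp x = {s | x s > 0} is strongly connected: for all p, q ∈ supp x, q is reachable from p under the reflexive-transitive closure of the restricted arc relation r' p' q' := (M p' q' ≤ 0) ∧ p' ∈ supp x ∧ q' ∈ supp x. -/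
open Matrix

/-- In a symmetric zero-sum game (antisymmetric `M`), the support of a Nash
equilibrium `x` (i.e. `(M.mulVec x) s ≤ 0` for all `s`) is contained in the
sink component `H` of the preference graph, and the subgraph of the preference
graph induced on the support of `x` is strongly connected. -/
theorem symmetric_nash_support_in_sink_and_strongly_connected {n : ℕ}
    (M : Matrix (Fin n) (Fin n) ℝ) (hM : Mᵀ = -M)
    (x : Fin n → ℝ) (hx : ∀ s, 0 ≤ x s) (hxsum : ∑ s, x s = 1)
    (H : Finset (Fin n)) (hH : IsSinkComponent (fun p q => M p q ≤ 0) H)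
    (hnash : ∀ s : Fin n, (M.mulVec x) s ≤ 0) :
    (∀ s : Fin n, 0 < x s → s ∈ H) ∧
    (∀ p q : Fin n, 0 < x p → 0 < x q →
      Relation.ReflTransGen
        (fun p' q' => M p' q' ≤ 0 ∧ 0 < x p' ∧ 0 < x q') p q) := by
  classical
  obtain ⟨hHne, hHconn, hHclosed⟩ := hH
  -- antisymmetry pointwise
  have hA : ∀ a b, M b a = -M a b := by
    intro a b
    have := congrFun (congrFun hM a) b
    simpa [Matrix.transpose_apply] using this
  -- pairing sum over a set vanishes
  have pair : ∀ A : Finset (Fin n),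
      ∑ a ∈ A, ∑ b ∈ A, x a * M a b * x b = 0 := by
    intro A
    have h1 : ∑ a ∈ A, ∑ b ∈ A, x a * M a b * x b
        = ∑ a ∈ A, ∑ b ∈ A, -(x b * M b a * x a) := by
      refine Finset.sum_congr rfl fun a _ => Finset.sum_congr rfl fun b _ => ?_
      rw [hA a b]; ring
    have h2 : ∑ a ∈ A, ∑ b ∈ A, x b * M b a * x a
        = ∑ a ∈ A, ∑ b ∈ A, x a * M a b * x b := Finset.sum_comm
    rw [h1] at *
    simp only [Finset.sum_neg_distrib] at *
    linarith [h2]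
  -- cross-sum identity
  have cross : ∀ A : Finset (Fin n),
      ∑ a ∈ A, x a * M.mulVec x a
        = ∑ a ∈ A, ∑ b ∈ Aᶜ, x a * M a b * x b := by
    intro A
    have h1 : ∀ a, x a * M.mulVec x a
        = ∑ b ∈ A, x a * M a b * x b + ∑ b ∈ Aᶜ, x a * M a b * x b := by
      intro a
      have : x a * M.mulVec x a = ∑ b, x a * M a b * x b := by
        simp [Matrix.mulVec, dotProduct, Finset.mul_sum, mul_assoc]
      rw [this, ← Finset.sum_add_sum_compl A]
    calc ∑ a ∈ A, x a * M.mulVec x a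
        = ∑ a ∈ A, (∑ b ∈ A, x a * M a b * x b + ∑ b ∈ Aᶜ, x a * M a b * x b) :=
          Finset.sum_congr rfl fun a _ => h1 a
      _ = (∑ a ∈ A, ∑ b ∈ A, x a * M a b * x b)
            + ∑ a ∈ A, ∑ b ∈ Aᶜ, x a * M a b * x b := Finset.sum_add_distrib
      _ = ∑ a ∈ A, ∑ b ∈ Aᶜ, x a * M a b * x b := by rw [pair A]; ring
  -- every support point has payoff zero
  have hK : ∀ s, x s * M.mulVec x s = 0 := by
    have htot : ∑ s, x s * M.mulVec x s = 0 := by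
      have := cross Finset.univ
      simpa using this
    have hnp : ∀ s ∈ Finset.univ, x s * M.mulVec x s ≤ 0 := fun s _ =>
      mul_nonpos_of_nonneg_of_nonpos (hx s) (hnash s)
    intro s
    exact (Finset.sum_eq_zero_iff_of_nonpos hnp).mp htot s (Finset.mem_univ s)
  -- part (i)
  have part1 : ∀ s : Fin n, 0 < x s → s ∈ H := by
    intro s hs
    by_contra hsH
    have hMpos : ∀ a ∈ H, ∀ b, b ∉ H → 0 < M a b := by
      intro a ha b hb
      by_contra h
      exact hb (hHclosed a ha b (not_lt.mp h))
    have hcross := cross H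
    have hL : ∑ a ∈ H, x a * M.mulVec x a = 0 :=
      Finset.sum_eq_zero fun a _ => hK a
    rw [hL] at hcross
    have hterm : ∀ a ∈ H, ∀ b ∈ Hᶜ, 0 ≤ x a * M a b * x b := by
      intro a ha b hb
      exact mul_nonneg (mul_nonneg (hx a)
        (hMpos a ha b (Finset.mem_compl.mp hb)).le) (hx b)
    have hzero : ∀ a ∈ H, ∀ b ∈ Hᶜ, x a * M a b * x b = 0 := by
      intro a ha b hb
      have houter := (Finset.sum_eq_zero_iff_of_nonneg
        (fun a ha => Finset.sum_nonneg fun b hb => hterm a ha b hb)).mp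
        hcross.symm a ha
      exact (Finset.sum_eq_zero_iff_of_nonneg (fun b hb => hterm a ha b hb)).mp
        houter b hb
    have hxa : ∀ a ∈ H, x a = 0 := by
      intro a ha
      have h0 := hzero a ha s (Finset.mem_compl.mpr hsH)
      have hMas := hMpos a ha s hsH
      rcases (hx a).eq_or_lt with h | h
      · exact h.symm
      · exact absurd h0 (mul_pos (mul_pos h hMas) hs).ne'
    obtain ⟨h₀, hh₀⟩ := hHne
    have hpos : 0 < M.mulVec x h₀ := by
      have hmv : M.mulVec x h₀ = ∑ b, M h₀ b * x b := rfl
      rw [hmv]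
      refine Finset.sum_pos' (fun b _ => ?_) ⟨s, Finset.mem_univ s, ?_⟩
      · by_cases hbH : b ∈ H
        · simp [hxa b hbH]
        · exact mul_nonneg (hMpos h₀ hh₀ b hbH).le (hx b)
      · exact mul_pos (hMpos h₀ hh₀ s hsH) hs
    linarith [hnash h₀]
  refine ⟨part1, ?_⟩
  -- part (ii)
  intro p q hp hq
  by_contra hreach
  set r' : Fin n → Fin n → Prop :=
    fun p' q' => M p' q' ≤ 0 ∧ 0 < x p' ∧ 0 < x q' with hr'
  set A : Finset (Fin n) :=
    Finset.univ.filter (fun s => 0 < x s ∧ Relation.ReflTransGen r' s q) with hAdef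
  have hqA : q ∈ A := by
    simp only [hAdef, Finset.mem_filter, Finset.mem_univ, true_and]
    exact ⟨hq, Relation.ReflTransGen.refl⟩
  have hpA : p ∉ A := by
    simp only [hAdef, Finset.mem_filter, Finset.mem_univ, true_and]
    intro h
    exact hreach h.2
  -- arcs from A to outside-the-support-or-unreachable are strictly negative
  have hMneg : ∀ a ∈ A, ∀ b, b ∉ A → 0 < x b → M a b < 0 := by
    intro a ha b hb hxb
    simp only [hAdef, Finset.mem_filter, Finset.mem_univ, true_and] at ha hb
    by_contra h
    have hMba : M b a ≤ 0 := by rw [hA a b] at *; linarith [not_lt.mp h]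
    exact hb ⟨hxb, Relation.ReflTransGen.head ⟨hMba, hxb, ha.1⟩ ha.2⟩
  have hcross := cross A
  have hL : ∑ a ∈ A, x a * M.mulVec x a = 0 :=
    Finset.sum_eq_zero fun a _ => hK a
  rw [hL] at hcross
  have hterm : ∀ a ∈ A, ∀ b ∈ Aᶜ, x a * M a b * x b ≤ 0 := by
    intro a ha b hb
    rcases eq_or_lt_of_le (hx b) with h0 | hxb
    · simp [← h0]
    · have hxa : 0 < x a := by
        simp only [hAdef, Finset.mem_filter, Finset.mem_univ, true_and] at ha
        exact ha.1
      have := hMneg a ha b (Finset.mem_compl.mp hb) hxb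
      exact (mul_neg_of_neg_of_pos (mul_neg_of_pos_of_neg hxa this) hxb).le
  have hzero : x q * M q p * x p = 0 := by
    have houter := (Finset.sum_eq_zero_iff_of_nonpos
      (fun a ha => Finset.sum_nonpos fun b hb => hterm a ha b hb)).mp
      hcross.symm q hqA
    exact (Finset.sum_eq_zero_iff_of_nonpos (fun b hb => hterm q hqA b hb)).mp
      houter p (Finset.mem_compl.mpr hpA)
  have := hMneg q hqA p hpA hp
  exact (mul_neg_of_neg_of_pos (mul_neg_of_pos_of_neg hq this) hp).ne hzero
end
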